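/- arXiv:1904.09278 — 8 statements merged into one kernel-verified Lean document; each statement's English description precedes it below -/
import Mathlib

section
/- Let (X, X₊) and (Y, Y₊) be Archimedean partially ordered real vector spaces and let f : X₊ → Y₊ be an order isomorphism. Then f maps the extreme rays of X₊ bijectively onto the extreme rays of Y₊; that is, for every extreme vector x of X₊ the image f[R_x] of the ray R_x = {λx : λ ≥ 0} is an extreme ray of Y₊, and every extreme ray of Y₊ arises in this way from exactly one extreme ray of X₊. -/
/-- `C` is a cone in the real vector space `X`: closed under addition and multiplication by
nonnegative scalars, and `C ∩ (-C) = {0}`. -/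
def IsWedgeCone {X : Type*} [AddCommGroup X] [Module ℝ X] (C : Set X) : Prop :=
  (∀ x ∈ C, ∀ y ∈ C, x + y ∈ C) ∧ (∀ t : ℝ, 0 ≤ t → ∀ x ∈ C, t • x ∈ C) ∧
    (∀ x ∈ C, -x ∈ C → x = 0)

/-- The partial order induced by the cone `C`: `x ≤ y` iff `y - x ∈ C`. -/
def ConeLE {X : Type*} [AddCommGroup X] (C : Set X) (x y : X) : Prop := y - x ∈ C

/-- `(X, C)` is Archimedean: for `x, y ∈ C`, if `n • x ≤ y` for all `n : ℕ` then `x ≤ 0`. -/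
def IsArchimedeanCone {X : Type*} [AddCommGroup X] [Module ℝ X] (C : Set X) : Prop :=
  ∀ x ∈ C, ∀ y ∈ C, (∀ n : ℕ, ConeLE C ((n : ℝ) • x) y) → ConeLE C x 0

/-- `x` is an extreme vector of the cone `C`: `x ∈ C` and `0 ≤ y ≤ x` implies `y = t • x`
for some `t ≥ 0`. -/
def IsExtremeVec {X : Type*} [AddCommGroup X] [Module ℝ X] (C : Set X) (x : X) : Prop :=
  x ∈ C ∧ ∀ y ∈ C, ConeLE C y x → ∃ t : ℝ, 0 ≤ t ∧ y = t • x

/-- The ray `R_x = {t • x : t ≥ 0}` spanned by `x`. -/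
def ConeRay {X : Type*} [AddCommGroup X] [Module ℝ X] (x : X) : Set X :=
  {z | ∃ t : ℝ, 0 ≤ t ∧ z = t • x}

/-- A subset `R` of `X` is an extreme ray of the cone `C` if it is the ray spanned by a
nonzero extreme vector of `C`. -/
def IsExtremeRay {X : Type*} [AddCommGroup X] [Module ℝ X] (C : Set X) (R : Set X) : Prop :=
  ∃ x, IsExtremeVec C x ∧ x ≠ 0 ∧ R = ConeRay x

section Aux

variable {X : Type*} [AddCommGroup X] [Module ℝ X] {C : Set X}

lemma wedge_add (hC : IsWedgeCone C) {a b : X} (ha : a ∈ C) (hb : b ∈ C) :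
    a + b ∈ C := hC.1 a ha b hb

lemma wedge_smul (hC : IsWedgeCone C) {t : ℝ} (ht : 0 ≤ t) {a : X} (ha : a ∈ C) :
    t • a ∈ C := hC.2.1 t ht a ha

lemma wedge_pointed (hC : IsWedgeCone C) {a : X} (ha : a ∈ C) (hna : -a ∈ C) :
    a = 0 := hC.2.2 a ha hna

lemma wedge_zero (hC : IsWedgeCone C) {a : X} (ha : a ∈ C) : (0 : X) ∈ C := by
  simpa using hC.2.1 0 le_rfl a ha

/-- If the order interval `[0,x]` is a chain, then `x` is an extreme vector. -/
lemma chain_imp_extreme (hC : IsWedgeCone C) (hArch : IsArchimedeanCone C)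
    {x : X} (hx : x ∈ C)
    (hchain : ∀ u ∈ C, ∀ v ∈ C, ConeLE C u x → ConeLE C v x → ConeLE C u v ∨ ConeLE C v u) :
    IsExtremeVec C x := by
  refine ⟨hx, fun y hy hyx => ?_⟩
  have hyx' : x - y ∈ C := hyx
  set S : Set ℝ := {s | 0 ≤ s ∧ s ≤ 1 ∧ y - s • x ∈ C} with hSdef
  have h0S : (0:ℝ) ∈ S := ⟨le_rfl, zero_le_one, by simpa using hy⟩
  have hbdd : BddAbove S := ⟨1, fun s hs => hs.2.1⟩
  set t := sSup S with htdef
  have ht0 : 0 ≤ t := le_csSup hbdd h0S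
  have ht1 : t ≤ 1 := csSup_le ⟨0, h0S⟩ (fun s hs => hs.2.1)
  have hlt : ∀ s : ℝ, 0 ≤ s → s < t → y - s • x ∈ C := by
    intro s hs0 hst
    obtain ⟨s', hs'S, hss'⟩ := exists_lt_of_lt_csSup ⟨0, h0S⟩ hst
    have heq : y - s • x = (y - s' • x) + (s' - s) • x := by module
    rw [heq]
    exact wedge_add hC hs'S.2.2 (wedge_smul hC (by linarith) hx)
  have hgt : ∀ s : ℝ, t < s → s ≤ 1 → s • x - y ∈ C := by
    intro s hts hs1
    have hs0 : 0 ≤ s := le_trans ht0 hts.le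
    have hnot : y - s • x ∉ C := fun hmem =>
      absurd (le_csSup hbdd ⟨hs0, hs1, hmem⟩) (not_le.mpr hts)
    have hsx : s • x ∈ C := wedge_smul hC hs0 hx
    have hsxle : ConeLE C (s • x) x := by
      show x - s • x ∈ C
      have heq : x - s • x = (1 - s) • x := by module
      rw [heq]; exact wedge_smul hC (by linarith) hx
    rcases hchain y hy (s • x) hsx hyx hsxle with h | h
    · exact h
    · exact absurd h hnot
  set w : X := t • x - y with hwdef
  have hplus : ∀ n : ℕ, x + (n : ℝ) • w ∈ C := by
    intro n
    by_cases h1 : t = 1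
    · have hw : w ∈ C := by rw [hwdef, h1, one_smul]; exact hyx'
      exact wedge_add hC hx (wedge_smul hC n.cast_nonneg hw)
    · have ht1' : t < 1 := lt_of_le_of_ne ht1 h1
      set ε : ℝ := min (1 - t) (1 / ((n : ℝ) + 1)) with hεdef
      have hε0 : 0 < ε := lt_min (by linarith) (by positivity)
      have hpos : (0:ℝ) < (n:ℝ) + 1 := by positivity
      have h2 : (n:ℝ) * (1 / ((n:ℝ) + 1)) ≤ 1 := by
        rw [mul_one_div, div_le_one hpos]; linarith
      have hεle : (n:ℝ) * ε ≤ 1 :=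
        le_trans (mul_le_mul_of_nonneg_left (min_le_right _ _) n.cast_nonneg) h2
      have hs1 : t + ε ≤ 1 := by have := min_le_left (1 - t) (1 / ((n:ℝ) + 1)); linarith
      have ha : w + ε • x ∈ C := by
        have h3 := hgt (t + ε) (by linarith) hs1
        have heq : (t + ε) • x - y = w + ε • x := by rw [hwdef]; module
        rwa [heq] at h3
      have heq : x + (n : ℝ) • w = (n : ℝ) • (w + ε • x) + (1 - (n:ℝ) * ε) • x := by module
      rw [heq]
      exact wedge_add hC (wedge_smul hC n.cast_nonneg ha) (wedge_smul hC (by linarith) hx)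
  have hminus : ∀ n : ℕ, x - (n : ℝ) • w ∈ C := by
    intro n
    by_cases h0 : t = 0
    · have hw : -w ∈ C := by
        rw [hwdef, h0]
        simpa using hy
      have heq : x - (n : ℝ) • w = x + (n : ℝ) • (-w) := by module
      rw [heq]
      exact wedge_add hC hx (wedge_smul hC n.cast_nonneg hw)
    · have ht0' : 0 < t := lt_of_le_of_ne ht0 (Ne.symm h0)
      set δ : ℝ := min t (1 / ((n:ℝ) + 1)) with hδdef
      have hδ0 : 0 < δ := lt_min ht0' (by positivity)
      have hδt : δ ≤ t := min_le_left _ _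
      have hb : δ • x - w ∈ C := by
        have h3 := hlt (t - δ) (by linarith) (by linarith)
        have heq : y - (t - δ) • x = δ • x - w := by rw [hwdef]; module
        rwa [heq] at h3
      have hpos : (0:ℝ) < (n:ℝ) + 1 := by positivity
      have h2 : (n:ℝ) * (1 / ((n:ℝ) + 1)) ≤ 1 := by
        rw [mul_one_div, div_le_one hpos]; linarith
      have hδle : (n:ℝ) * δ ≤ 1 :=
        le_trans (mul_le_mul_of_nonneg_left (min_le_right _ _) n.cast_nonneg) h2
      have heq : x - (n : ℝ) • w = (n : ℝ) • (δ • x - w) + (1 - (n:ℝ) * δ) • x := by module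
      rw [heq]
      exact wedge_add hC (wedge_smul hC n.cast_nonneg hb) (wedge_smul hC (by linarith) hx)
  have hcomp : w ∈ C ∨ -w ∈ C := by
    by_cases h0 : t = 0
    · right; rw [hwdef, h0]; simpa using hy
    by_cases h1 : t = 1
    · left; rw [hwdef, h1, one_smul]; exact hyx'
    have ht0' : 0 < t := lt_of_le_of_ne ht0 (Ne.symm h0)
    have ht1' : t < 1 := lt_of_le_of_ne ht1 h1
    set ε : ℝ := min t (1 - t) with hεdef
    have hε0 : 0 < ε := lt_min ht0' (by linarith)
    have hεt : ε ≤ t := min_le_left _ _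
    have hε1t : ε ≤ 1 - t := min_le_right _ _
    have haC : w + ε • x ∈ C := by
      have h3 := hgt (t + ε) (by linarith) (by linarith)
      have heq : (t + ε) • x - y = w + ε • x := by rw [hwdef]; module
      rwa [heq] at h3
    have hbC : ε • x - w ∈ C := by
      have h3 := hlt (t - ε) (by linarith) (by linarith)
      have heq : y - (t - ε) • x = ε • x - w := by rw [hwdef]; module
      rwa [heq] at h3
    have halex : ConeLE C (w + ε • x) x := by
      show x - (w + ε • x) ∈ C
      have heq : x - (w + ε • x) = (1 - t - ε) • x + y := by rw [hwdef]; module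
      rw [heq]
      exact wedge_add hC (wedge_smul hC (by linarith) hx) hy
    have hblex : ConeLE C (ε • x - w) x := by
      show x - (ε • x - w) ∈ C
      have heq : x - (ε • x - w) = (t - ε) • x + (x - y) := by rw [hwdef]; module
      rw [heq]
      exact wedge_add hC (wedge_smul hC (by linarith) hx) hyx'
    rcases hchain _ haC _ hbC halex hblex with h | h
    · right
      have h2 : (ε • x - w) - (w + ε • x) ∈ C := h
      have heq : (ε • x - w) - (w + ε • x) = (2:ℝ) • (-w) := by module
      rw [heq] at h2
      have heq2 : -w = (1/2 : ℝ) • ((2:ℝ) • (-w)) := by module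
      rw [heq2]
      exact wedge_smul hC (by norm_num) h2
    · left
      have h2 : (w + ε • x) - (ε • x - w) ∈ C := h
      have heq : (w + ε • x) - (ε • x - w) = (2:ℝ) • w := by module
      rw [heq] at h2
      have heq2 : w = (1/2 : ℝ) • ((2:ℝ) • w) := by module
      rw [heq2]
      exact wedge_smul hC (by norm_num) h2
  have hw0 : w = 0 := by
    rcases hcomp with hw | hnw
    · have harch := hArch w hw x hx (fun n => by
        show x - (n : ℝ) • w ∈ C
        exact hminus n)
      have harch' : (0:X) - w ∈ C := harch
      have hnw : -w ∈ C := by simpa using harch'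
      exact wedge_pointed hC hw hnw
    · have harch := hArch (-w) hnw x hx (fun n => by
        show x - (n : ℝ) • (-w) ∈ C
        have heq : x - (n : ℝ) • (-w) = x + (n : ℝ) • w := by module
        rw [heq]; exact hplus n)
      have harch' : (0:X) - (-w) ∈ C := harch
      have hw : w ∈ C := by simpa using harch'
      exact wedge_pointed hC hw (by simpa using hnw)
  refine ⟨t, ht0, ?_⟩
  have : t • x - y = 0 := hw0
  linear_combination (norm := module) -this

end Aux

section Aux2

variable {X : Type*} [AddCommGroup X] [Module ℝ X] {C : Set X}

/-- An extreme vector has a chain below it. -/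
lemma extreme_imp_chain (hC : IsWedgeCone C) {x : X} (hx : IsExtremeVec C x) :
    ∀ u ∈ C, ∀ v ∈ C, ConeLE C u x → ConeLE C v x → ConeLE C u v ∨ ConeLE C v u := by
  intro u hu v hv hux hvx
  obtain ⟨s, hs, rfl⟩ := hx.2 u hu hux
  obtain ⟨r, hr, rfl⟩ := hx.2 v hv hvx
  rcases le_total s r with h | h
  · left
    show r • x - s • x ∈ C
    have heq : r • x - s • x = (r - s) • x := by module
    rw [heq]; exact wedge_smul hC (by linarith) hx.1
  · right
    show s • x - r • x ∈ C
    have heq : s • x - r • x = (s - r) • x := by module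
    rw [heq]; exact wedge_smul hC (by linarith) hx.1

lemma smul_extreme (hC : IsWedgeCone C) {t : ℝ} (ht : 0 < t) {x : X}
    (hx : IsExtremeVec C x) : IsExtremeVec C (t • x) := by
  refine ⟨wedge_smul hC ht.le hx.1, fun y hy hytx => ?_⟩
  have h1 : t⁻¹ • y ∈ C := wedge_smul hC (inv_nonneg.mpr ht.le) hy
  have h2 : ConeLE C (t⁻¹ • y) x := by
    show x - t⁻¹ • y ∈ C
    have heq : x - t⁻¹ • y = t⁻¹ • (t • x - y) := by
      rw [smul_sub, smul_smul, inv_mul_cancel₀ (ne_of_gt ht), one_smul]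
    rw [heq]; exact wedge_smul hC (inv_nonneg.mpr ht.le) hytx
  obtain ⟨s, hs, hys⟩ := hx.2 _ h1 h2
  refine ⟨s, hs, ?_⟩
  have h3 : y = t • (t⁻¹ • y) := by
    rw [smul_smul, mul_inv_cancel₀ (ne_of_gt ht), one_smul]
  rw [h3, hys, smul_smul, smul_smul, mul_comm]

/-- Order-theoretic description of the ray of a nonzero extreme vector. -/
lemma ray_eq (hC : IsWedgeCone C) {x : X} (hx : IsExtremeVec C x) (hx0 : x ≠ 0) :
    ConeRay x = {z | z ∈ C ∧ ConeLE C z x} ∪ {z | IsExtremeVec C z ∧ ConeLE C x z} := by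
  ext z
  constructor
  · rintro ⟨t, ht, rfl⟩
    rcases le_total t 1 with h | h
    · left
      refine ⟨wedge_smul hC ht hx.1, ?_⟩
      show x - t • x ∈ C
      have heq : x - t • x = (1 - t) • x := by module
      rw [heq]; exact wedge_smul hC (by linarith) hx.1
    · right
      refine ⟨smul_extreme hC (lt_of_lt_of_le one_pos h) hx, ?_⟩
      show t • x - x ∈ C
      have heq : t • x - x = (t - 1) • x := by module
      rw [heq]; exact wedge_smul hC (by linarith) hx.1
  · rintro (⟨hz, hzx⟩ | ⟨hz, hxz⟩)
    · exact hx.2 z hz hzx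
    · obtain ⟨s, hs, hxs⟩ := hz.2 x hx.1 hxz
      have hs0 : s ≠ 0 := by
        rintro rfl
        rw [zero_smul] at hxs
        exact hx0 hxs
      refine ⟨s⁻¹, inv_nonneg.mpr hs, ?_⟩
      rw [hxs, smul_smul, inv_mul_cancel₀ hs0, one_smul]

end Aux2

section Transfer

variable {X Y : Type*} [AddCommGroup X] [Module ℝ X] [AddCommGroup Y] [Module ℝ Y]
  {C : Set X} {D : Set Y} {f : X → Y}

lemma extreme_image (hC : IsWedgeCone C) (hD : IsWedgeCone D) (hDarch : IsArchimedeanCone D)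
    (hbij : Set.BijOn f C D)
    (hiso : ∀ x ∈ C, ∀ y ∈ C, (ConeLE C x y ↔ ConeLE D (f x) (f y)))
    {x : X} (hx : IsExtremeVec C x) : IsExtremeVec D (f x) := by
  apply chain_imp_extreme hD hDarch (hbij.mapsTo hx.1)
  intro u hu v hv hux hvx
  obtain ⟨a, ha, rfl⟩ := hbij.surjOn hu
  obtain ⟨b, hb, rfl⟩ := hbij.surjOn hv
  have hax : ConeLE C a x := (hiso a ha x hx.1).mpr hux
  have hbx : ConeLE C b x := (hiso b hb x hx.1).mpr hvx
  rcases extreme_imp_chain hC hx a ha b hb hax hbx with h | h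
  · exact Or.inl ((hiso a ha b hb).mp h)
  · exact Or.inr ((hiso b hb a ha).mp h)

lemma extreme_preimage (hC : IsWedgeCone C) (hD : IsWedgeCone D)
    (hCarch : IsArchimedeanCone C) (hbij : Set.BijOn f C D)
    (hiso : ∀ x ∈ C, ∀ y ∈ C, (ConeLE C x y ↔ ConeLE D (f x) (f y)))
    {x : X} (hxC : x ∈ C) (hfx : IsExtremeVec D (f x)) : IsExtremeVec C x := by
  apply chain_imp_extreme hC hCarch hxC
  intro u hu v hv hux hvx
  have h1 : ConeLE D (f u) (f x) := (hiso u hu x hxC).mp hux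
  have h2 : ConeLE D (f v) (f x) := (hiso v hv x hxC).mp hvx
  rcases extreme_imp_chain hD hfx (f u) (hbij.mapsTo hu) (f v) (hbij.mapsTo hv) h1 h2 with h | h
  · exact Or.inl ((hiso u hu v hv).mpr h)
  · exact Or.inr ((hiso v hv u hu).mpr h)

lemma f_zero (hC : IsWedgeCone C) (hD : IsWedgeCone D) (hbij : Set.BijOn f C D)
    (hiso : ∀ x ∈ C, ∀ y ∈ C, (ConeLE C x y ↔ ConeLE D (f x) (f y)))
    (h0C : (0 : X) ∈ C) : f 0 = 0 := by
  have h0D : (0 : Y) ∈ D := wedge_zero hD (hbij.mapsTo h0C)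
  obtain ⟨c, hc, hfc⟩ := hbij.surjOn h0D
  have h1 : ConeLE C 0 c := by show c - 0 ∈ C; simpa using hc
  have h2 : ConeLE D (f 0) (f c) := (hiso 0 h0C c hc).mp h1
  rw [hfc] at h2
  have h3 : (0 : Y) - f 0 ∈ D := h2
  exact wedge_pointed hD (hbij.mapsTo h0C) (by simpa using h3)

lemma image_ray (hC : IsWedgeCone C) (hD : IsWedgeCone D)
    (hCarch : IsArchimedeanCone C) (hDarch : IsArchimedeanCone D)
    (hbij : Set.BijOn f C D)
    (hiso : ∀ x ∈ C, ∀ y ∈ C, (ConeLE C x y ↔ ConeLE D (f x) (f y)))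
    {x : X} (hx : IsExtremeVec C x) (hx0 : x ≠ 0) :
    f '' ConeRay x = ConeRay (f x) := by
  have h0C : (0 : X) ∈ C := wedge_zero hC hx.1
  have hfx : IsExtremeVec D (f x) := extreme_image hC hD hDarch hbij hiso hx
  have hf0 : f 0 = 0 := f_zero hC hD hbij hiso h0C
  have hfx0 : f x ≠ 0 := fun h => hx0 (hbij.injOn hx.1 h0C (by rw [h, hf0]))
  rw [ray_eq hC hx hx0, ray_eq hD hfx hfx0, Set.image_union]
  congr 1
  · ext z
    constructor
    · rintro ⟨a, ⟨haC, hax⟩, rfl⟩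
      exact ⟨hbij.mapsTo haC, (hiso a haC x hx.1).mp hax⟩
    · rintro ⟨hzD, hzfx⟩
      obtain ⟨a, haC, rfl⟩ := hbij.surjOn hzD
      exact ⟨a, ⟨haC, (hiso a haC x hx.1).mpr hzfx⟩, rfl⟩
  · ext z
    constructor
    · rintro ⟨a, ⟨haext, hxa⟩, rfl⟩
      exact ⟨extreme_image hC hD hDarch hbij hiso haext, (hiso x hx.1 a haext.1).mp hxa⟩
    · rintro ⟨hzext, hfxz⟩
      obtain ⟨a, haC, rfl⟩ := hbij.surjOn hzext.1
      exact ⟨a, ⟨extreme_preimage hC hD hCarch hbij hiso haC hzext,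
        (hiso x hx.1 a haC).mpr hfxz⟩, rfl⟩

end Transfer

/-- An order isomorphism `f : X₊ → Y₊` between cones of Archimedean partially
ordered real vector spaces maps the extreme rays of `X₊` bijectively onto the extreme rays
of `Y₊`. -/
theorem order_iso_maps_extreme_rays_bijectively
    {X Y : Type*} [AddCommGroup X] [Module ℝ X] [AddCommGroup Y] [Module ℝ Y]
    (C : Set X) (D : Set Y) (hC : IsWedgeCone C) (hD : IsWedgeCone D)
    (hCarch : IsArchimedeanCone C) (hDarch : IsArchimedeanCone D)
    (f : X → Y) (hbij : Set.BijOn f C D)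
    (hiso : ∀ x ∈ C, ∀ y ∈ C, (ConeLE C x y ↔ ConeLE D (f x) (f y))) :
    (∀ x, IsExtremeVec C x → x ≠ 0 → IsExtremeRay D (f '' ConeRay x)) ∧
      (∀ R, IsExtremeRay D R → ∃! S, IsExtremeRay C S ∧ f '' S = R) := by
  constructor
  · intro x hx hx0
    have h0C : (0 : X) ∈ C := wedge_zero hC hx.1
    have hfx : IsExtremeVec D (f x) := extreme_image hC hD hDarch hbij hiso hx
    have hf0 : f 0 = 0 := f_zero hC hD hbij hiso h0C
    have hfx0 : f x ≠ 0 := fun h => hx0 (hbij.injOn hx.1 h0C (by rw [h, hf0]))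
    exact ⟨f x, hfx, hfx0, image_ray hC hD hCarch hDarch hbij hiso hx hx0⟩
  · rintro R ⟨y, hy, hy0, rfl⟩
    obtain ⟨x, hxC, rfl⟩ := hbij.surjOn hy.1
    have hx : IsExtremeVec C x := extreme_preimage hC hD hCarch hbij hiso hxC hy
    have hx0 : x ≠ 0 := by
      rintro rfl
      exact hy0 (f_zero hC hD hbij hiso hxC)
    refine ⟨ConeRay x, ⟨⟨x, hx, hx0, rfl⟩,
      image_ray hC hD hCarch hDarch hbij hiso hx hx0⟩, ?_⟩
    rintro S ⟨⟨x', hx', hx'0, rfl⟩, hS⟩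
    have h1 : f x' ∈ ConeRay (f x) := by
      rw [← hS]
      exact ⟨x', ⟨1, zero_le_one, (one_smul ℝ x').symm⟩, rfl⟩
    have h2 := image_ray hC hD hCarch hDarch hbij hiso hx hx0
    have h3 : f x' ∈ f '' ConeRay x := by rw [h2]; exact h1
    obtain ⟨a, ⟨s, hs, rfl⟩, hfa⟩ := h3
    have hax : x' = s • x := hbij.injOn hx'.1 (wedge_smul hC hs hx.1) hfa.symm
    have hs0 : s ≠ 0 := by
      rintro rfl
      rw [zero_smul] at hax
      exact hx'0 hax
    rw [hax]
    ext z
    simp only [ConeRay, Set.mem_setOf_eq]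
    constructor
    · rintro ⟨r, hr, rfl⟩
      exact ⟨r * s, mul_nonneg hr hs, smul_smul r s x⟩
    · rintro ⟨r, hr, rfl⟩
      exact ⟨r / s, div_nonneg hr hs, by rw [smul_smul, div_mul_cancel₀ _ hs0]⟩
end

section
/- Let A and B be unital C*-algebras, let A_sa and B_sa denote their selfadjoint parts partially ordered by the cones of positive elements, and let T : A_sa → B_sa be a real-linear bijection with T(1) = 1. Then the following are equivalent: (i) T is an isometry, i.e. ‖Tx‖ = ‖x‖ for all x ∈ A_sa; (ii) T is an order isomorphism, i.e. both T and T⁻¹ map positive elements to positive elements; (iii) T is a Jordan isomorphism, i.e. T(x∘y) = T(x)∘T(y) for all x, y ∈ A_sa, where x∘y = (xy + yx)/2 is the Jordan product. -/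
/-!
For selfadjoint `x` one has `‖x‖ ≤ r ↔ -r ≤ x ≤ r`, and if `‖x‖ ≤ r` then `0 ≤ x ↔ ‖r - x‖ ≤ r`.
Hence a unital real-linear map between selfadjoint parts is positive iff it is contractive, which
gives (i) ⇔ (ii). A Jordan map preserves squares, hence positivity, and so does its inverse.
Conversely, a unital positive map `S` satisfies Kadison's inequality `S(a)² ≤ S(a²)`: the
functional calculus of `a` yields positive `uₖ` with `∑ uₖ = 1`, `∑ cₖ uₖ = a` and
`∑ cₖ² uₖ ≤ a² + ε`, while `(∑ cₖ pₖ)² ≤ ∑ cₖ² pₖ` for any positive `pₖ` with `∑ pₖ = 1`.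
Applied to `T` and to `T⁻¹` the inequality forces `T(a²) = T(a)²`, and polarization gives the
Jordan identity.
-/

section Tent

open Finset

def tent (s : ℝ) : ℝ := max 0 (1 - |s|)

lemma tent_nonneg (s : ℝ) : 0 ≤ tent s := le_max_left _ _

lemma continuous_tent : Continuous tent := by
  unfold tent; fun_prop

lemma tent_eq_zero_of_one_le_abs {s : ℝ} (h : 1 ≤ |s|) : tent s = 0 :=
  max_eq_left (by linarith)

lemma tent_eq_one_sub_abs_of_abs_le_one {s : ℝ} (h : |s| ≤ 1) : tent s = 1 - |s| :=
  max_eq_right (by linarith)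

lemma sum_mul_tent_sub_intCast (g : ℤ → ℝ) {S : Finset ℤ} {s : ℝ} (h₀ : ⌊s⌋ ∈ S)
    (h₁ : ⌊s⌋ + 1 ∈ S) :
    ∑ k ∈ S, g k * tent (s - k) = (1 - Int.fract s) * g ⌊s⌋ + Int.fract s * g (⌊s⌋ + 1) := by
  have hfar : ∀ k ∈ S, k ∉ ({⌊s⌋, ⌊s⌋ + 1} : Finset ℤ) → g k * tent (s - k) = 0 := by
    intro k _ hk
    simp only [mem_insert, mem_singleton, not_or] at hk
    rw [tent_eq_zero_of_one_le_abs, mul_zero]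
    rcases lt_or_gt_of_ne hk.1 with hlt | hgt
    · have : (k : ℝ) + 1 ≤ ⌊s⌋ := by exact_mod_cast hlt
      rw [abs_of_nonneg] <;> linarith [Int.floor_le s]
    · have : (⌊s⌋ : ℝ) + 2 ≤ k := by exact_mod_cast (by omega : ⌊s⌋ + 2 ≤ k)
      rw [abs_of_nonpos] <;> linarith [Int.lt_floor_add_one s]
  rw [← sum_subset (insert_subset h₀ (singleton_subset_iff.2 h₁)) hfar,
    sum_pair (by omega), Int.cast_add, Int.cast_one, ← sub_sub, Int.self_sub_floor,
    tent_eq_one_sub_abs_of_abs_le_one, tent_eq_one_sub_abs_of_abs_le_one,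
    abs_of_nonneg (Int.fract_nonneg s), abs_of_neg (by linarith [Int.fract_lt_one s])]
  · ring
  all_goals rw [abs_le]; constructor <;> linarith [Int.fract_nonneg s, Int.fract_lt_one s]

lemma sum_tent_sub_intCast (S : Finset ℤ) {s : ℝ} (h₀ : ⌊s⌋ ∈ S) (h₁ : ⌊s⌋ + 1 ∈ S) :
    ∑ k ∈ S, tent (s - k) = 1 := by
  simpa using sum_mul_tent_sub_intCast 1 h₀ h₁

lemma sum_mul_tent_div_sub_intCast {δ : ℝ} (hδ : δ ≠ 0) (S : Finset ℤ) {t : ℝ}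
    (h₀ : ⌊t / δ⌋ ∈ S) (h₁ : ⌊t / δ⌋ + 1 ∈ S) :
    ∑ k ∈ S, (k * δ) * tent (t / δ - k) = t := by
  rw [sum_mul_tent_sub_intCast (fun k => k * δ) h₀ h₁]
  have := Int.floor_add_fract (t / δ)
  field_simp at this ⊢
  push_cast
  linear_combination this

lemma sum_sq_mul_tent_div_sub_intCast_le {δ : ℝ} (hδ : δ ≠ 0) (S : Finset ℤ) {t : ℝ}
    (h₀ : ⌊t / δ⌋ ∈ S) (h₁ : ⌊t / δ⌋ + 1 ∈ S) :
    ∑ k ∈ S, (k * δ) ^ 2 * tent (t / δ - k) ≤ t ^ 2 + δ ^ 2 := by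
  rw [sum_mul_tent_sub_intCast (fun k => (k * δ) ^ 2) h₀ h₁]
  have ht : t = (⌊t / δ⌋ + Int.fract (t / δ)) * δ := by
    rw [Int.floor_add_fract, div_mul_cancel₀ _ hδ]
  set r := Int.fract (t / δ)
  set j := ⌊t / δ⌋
  have hr : r * (1 - r) ≤ 1 := by nlinarith [Int.fract_nonneg (t / δ), Int.fract_lt_one (t / δ)]
  calc (1 - r) * (j * δ) ^ 2 + r * (((j + 1 : ℤ) : ℝ) * δ) ^ 2
      = t ^ 2 + r * (1 - r) * δ ^ 2 := by rw [ht]; push_cast; ring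
    _ ≤ t ^ 2 + δ ^ 2 := by nlinarith [sq_nonneg δ]

end Tent

section Jensen

open Finset

/-- The difference is `∑ i, (c i - m) * p i * (c i - m) ≥ 0`, where `m = ∑ i, c i • p i`. -/
lemma sq_sum_smul_le_sum_sq_smul {R : Type*} [Ring R] [StarRing R] [PartialOrder R]
    [StarOrderedRing R] [Algebra ℝ R] [StarModule ℝ R] {ι : Type*} (s : Finset ι) (c : ι → ℝ)
    {p : ι → R} (hp : ∀ i ∈ s, 0 ≤ p i) (hsum : ∑ i ∈ s, p i = 1) :
    (∑ i ∈ s, c i • p i) ^ 2 ≤ ∑ i ∈ s, c i ^ 2 • p i := by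
  set m := ∑ i ∈ s, c i • p i
  have hm : IsSelfAdjoint m :=
    isSelfAdjoint_sum s fun i hi => (IsSelfAdjoint.all (c i)).smul (.of_nonneg (hp i hi))
  have hterm (i : ι) : (c i • 1 - m) * p i * (c i • 1 - m) =
      c i ^ 2 • p i - m * (c i • p i) - (c i • p i) * m + m * p i * m := by
    simp only [sub_mul, mul_sub, smul_mul_assoc, mul_smul_comm, one_mul, mul_one]
    module
  have hexpand :
      ∑ i ∈ s, (c i • 1 - m) * p i * (c i • 1 - m) = ∑ i ∈ s, c i ^ 2 • p i - m ^ 2 := by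
    simp only [hterm, sum_add_distrib, sum_sub_distrib, ← mul_sum, ← sum_mul, hsum]
    noncomm_ring
  rw [← sub_nonneg, ← hexpand]
  refine sum_nonneg fun i hi => ?_
  have hc : IsSelfAdjoint (c i • (1 : R) - m) := ((IsSelfAdjoint.all (c i)).smul (.one R)).sub hm
  simpa [hc.star_eq] using star_left_conjugate_nonneg (hp i hi) (c i • (1 : R) - m)

end Jensen

lemma sum_smul_cfc {R A : Type*} {p : A → Prop} [CommSemiring R] [StarRing R] [MetricSpace R]
    [IsTopologicalSemiring R] [ContinuousStar R] [TopologicalSpace A] [Ring A] [StarRing A]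
    [Algebra R A] [ContinuousFunctionalCalculus R A p] {ι : Type*} (S : Finset ι) (g : ι → R)
    (f : ι → R → R) (a : A) (hf : ∀ i ∈ S, ContinuousOn (f i) (spectrum R a)) :
    ∑ i ∈ S, g i • cfc (f i) a = cfc (fun t => ∑ i ∈ S, g i * f i t) a := by
  rw [← Finset.sum_fn,
    cfc_sum (fun i t => g i * f i t) a S fun i hi => continuousOn_const.mul (hf i hi)]
  exact Finset.sum_congr rfl fun i hi => (cfc_const_mul (g i) (f i) a (hf i hi)).symm

namespace selfAdjoint

section Jordan

variable {A : Type*} [Ring A] [StarRing A] [Module ℝ A] [StarModule ℝ A]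

noncomputable def jordanMul (x y : selfAdjoint A) : selfAdjoint A :=
  ⟨(2 : ℝ)⁻¹ • ((x : A) * y + y * x), by
    simp only [mem_iff, star_smul, star_add, star_mul, star_trivial, x.2.star_eq, y.2.star_eq,
      add_comm]⟩

lemma jordanMul_self (x : selfAdjoint A) : jordanMul x x = x ^ 2 := by
  ext
  simp only [jordanMul, val_pow, ← two_smul ℝ ((x : A) * x), smul_smul, sq]
  norm_num

lemma jordanMul_eq_smul_sq_sub (x y : selfAdjoint A) :
    jordanMul x y = (2 : ℝ)⁻¹ • ((x + y) ^ 2 - x ^ 2 - y ^ 2) := by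
  ext
  simp only [jordanMul, val_smul, AddSubgroupClass.coe_sub, AddMemClass.coe_add, val_pow]
  congr 1
  noncomm_ring

lemma map_jordanMul_iff_map_sq {B : Type*} [Ring B] [StarRing B] [Module ℝ B] [StarModule ℝ B]
    {F : Type*} [FunLike F (selfAdjoint A) (selfAdjoint B)]
    [LinearMapClass F ℝ (selfAdjoint A) (selfAdjoint B)] (L : F) :
    (∀ x y, L (jordanMul x y) = jordanMul (L x) (L y)) ↔ ∀ x, L (x ^ 2) = L x ^ 2 := by
  refine ⟨fun h x => by rw [← jordanMul_self, h, jordanMul_self], fun h x y => ?_⟩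
  rw [jordanMul_eq_smul_sq_sub, jordanMul_eq_smul_sq_sub, map_smul, map_sub, map_sub, h, h, h,
    map_add]

end Jordan

noncomputable def linearEquivOfBijOn {A B : Type*} [AddCommGroup A] [StarAddMonoid A]
    [Module ℝ A] [StarModule ℝ A] [AddCommGroup B] [StarAddMonoid B] [Module ℝ B]
    [StarModule ℝ B] (T : A → B) (hT : Set.BijOn T {x | IsSelfAdjoint x} {y | IsSelfAdjoint y})
    (hadd : ∀ x y : A, IsSelfAdjoint x → IsSelfAdjoint y → T (x + y) = T x + T y)
    (hsmul : ∀ (t : ℝ) (x : A), IsSelfAdjoint x → T (t • x) = t • T x) :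
    selfAdjoint A ≃ₗ[ℝ] selfAdjoint B :=
  .ofBijective (M := selfAdjoint A) (M₂ := selfAdjoint B)
    { toFun x := ⟨T x, hT.mapsTo x.2⟩
      map_add' x y := Subtype.ext (hadd x y x.2 y.2)
      map_smul' t x := Subtype.ext (hsmul t x x.2) }
    hT.bijective

lemma coe_smul_one {A : Type*} [Ring A] [StarRing A] [Algebra ℝ A] [StarModule ℝ A] (r : ℝ) :
    ((r • 1 : selfAdjoint A) : A) = algebraMap ℝ A r := by
  rw [val_smul, val_one, Algebra.algebraMap_eq_smul_one]

variable {A : Type*} [CStarAlgebra A] [PartialOrder A] [StarOrderedRing A]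

lemma norm_le_iff (x : selfAdjoint A) {r : ℝ} (hr : 0 ≤ r) :
    ‖x‖ ≤ r ↔ -(r • 1) ≤ x ∧ x ≤ r • 1 := by
  have hnorm : ‖(x : A)‖ ≤ r ↔ ∀ t ∈ spectrum ℝ (x : A), |t| ≤ r := by
    have := norm_cfc_le_iff (fun t : ℝ => t) (x : A) hr
    rwa [cfc_id' ℝ (x : A)] at this
  change ‖(x : A)‖ ≤ r ↔
    ((-(r • 1) : selfAdjoint A) : A) ≤ x ∧ (x : A) ≤ ((r • 1 : selfAdjoint A) : A)
  rw [NegMemClass.coe_neg, coe_smul_one, ← map_neg, algebraMap_le_iff_le_spectrum,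
    le_algebraMap_iff_spectrum_le, ← forall₂_and, hnorm]
  simp only [abs_le]

lemma nonneg_iff_norm_smul_one_sub_le {x : selfAdjoint A} {r : ℝ} (hx : ‖x‖ ≤ r) :
    0 ≤ x ↔ ‖r • 1 - x‖ ≤ r := by
  have hr : 0 ≤ r := (norm_nonneg x).trans hx
  rw [norm_le_iff _ hr, neg_le_sub_iff_le_add, sub_le_self_iff, and_iff_right_of_imp]
  intro hx₀
  have hxr := ((norm_le_iff x hr).1 hx).2
  exact hxr.trans (le_add_of_nonneg_right (hx₀.trans hxr))

lemma le_of_forall_pos_le_add_smul_one {x y : selfAdjoint A}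
    (h : ∀ ε : ℝ, 0 < ε → x ≤ y + ε • 1) : x ≤ y := by
  rw [← sub_nonneg]
  change (0 : A) ≤ ((y - x : selfAdjoint A) : A)
  rw [← map_zero (algebraMap ℝ A), algebraMap_le_iff_le_spectrum (y - x).2]
  intro t ht
  refine le_of_forall_pos_le_add fun ε hε => ?_
  have hε' : algebraMap ℝ A (-ε) ≤ ((y - x : selfAdjoint A) : A) := by
    rw [map_neg, ← coe_smul_one, ← NegMemClass.coe_neg]
    exact neg_le_sub_iff_le_add.2 (h ε hε)
  linarith [(algebraMap_le_iff_le_spectrum (y - x).2).1 hε' t ht]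

open Finset in
/-- The `u k` are a partition of unity into tent functions of width `√ε`, taken through the
continuous functional calculus of `a`. -/
lemma exists_partition_sum_smul_eq (a : selfAdjoint A) {ε : ℝ} (hε : 0 < ε) :
    ∃ (S : Finset ℤ) (u : ℤ → selfAdjoint A) (c : ℤ → ℝ), (∀ k, 0 ≤ u k) ∧
      ∑ k ∈ S, u k = 1 ∧ ∑ k ∈ S, c k • u k = a ∧ ∑ k ∈ S, c k ^ 2 • u k ≤ a ^ 2 + ε • 1 := by
  set δ := √ε
  have hδ : δ ≠ 0 := (Real.sqrt_pos.2 hε).ne'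
  set f : ℤ → ℝ → ℝ := fun k t => tent (t / δ - k)
  have hf : ∀ k, Continuous (f k) := fun k => continuous_tent.comp (by fun_prop)
  set N : ℤ := ⌈‖a‖ / δ⌉ + 1
  set S := Icc (-N) N
  have hS : ∀ t ∈ spectrum ℝ (a : A), ⌊t / δ⌋ ∈ S ∧ ⌊t / δ⌋ + 1 ∈ S := by
    intro t ht
    obtain _ | _ := subsingleton_or_nontrivial A
    · simp [spectrum.of_subsingleton] at ht
    have ht' : |t / δ| ≤ ‖a‖ / δ := by
      rw [abs_div, abs_of_pos (Real.sqrt_pos.2 hε)]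
      exact div_le_div_of_nonneg_right (spectrum.norm_le_norm_of_mem ht) (Real.sqrt_nonneg ε)
    have hceil := Int.le_ceil (‖a‖ / δ)
    have hlo : -⌈‖a‖ / δ⌉ ≤ ⌊t / δ⌋ :=
      Int.le_floor.2 (by push_cast; linarith [neg_abs_le (t / δ)])
    have hhi : ⌊t / δ⌋ ≤ ⌈‖a‖ / δ⌉ :=
      Int.cast_le.1 ((Int.floor_le _).trans ((le_abs_self _).trans (ht'.trans hceil)))
    simp only [S, N, mem_Icc]
    omega
  let u : ℤ → selfAdjoint A := fun k => ⟨cfc (f k) (a : A), cfc_predicate _ _⟩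
  have hu (g : ℤ → ℝ) :
      ((∑ k ∈ S, g k • u k : selfAdjoint A) : A) = cfc (fun t => ∑ k ∈ S, g k * f k t) (a : A) := by
    rw [AddSubgroup.val_finsetSum]
    exact sum_smul_cfc S g f _ fun k _ => (hf k).continuousOn
  refine ⟨S, u, fun k => k * δ, fun k => cfc_nonneg fun t _ => tent_nonneg _, ?_, ?_, ?_⟩
  · have hu₁ : ((∑ k ∈ S, u k : selfAdjoint A) : A) = cfc (fun t => ∑ k ∈ S, f k t) (a : A) := by
      simpa only [one_smul, one_mul] using hu fun _ => 1
    ext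
    rw [hu₁, val_one, ← cfc_const_one ℝ (a : A)]
    exact cfc_congr fun t ht => sum_tent_sub_intCast S (hS t ht).1 (hS t ht).2
  · ext
    rw [hu]
    exact (cfc_congr fun t ht => sum_mul_tent_div_sub_intCast hδ S (hS t ht).1 (hS t ht).2).trans
      (cfc_id' ℝ (a : A))
  · change ((∑ k ∈ S, (k * δ) ^ 2 • u k : selfAdjoint A) : A) ≤
      ((a ^ 2 + ε • 1 : selfAdjoint A) : A)
    rw [hu, AddMemClass.coe_add, val_pow, coe_smul_one, ← cfc_pow_id (R := ℝ) (a : A) 2,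
      ← cfc_add_const ε (fun t : ℝ => t ^ 2) (a : A)]
    refine cfc_mono fun t ht => ?_
    simpa only [δ, Real.sq_sqrt hε.le] using
      sum_sq_mul_tent_div_sub_intCast_le hδ S (hS t ht).1 (hS t ht).2

end selfAdjoint

namespace LinearEquiv

variable {R M N : Type*} [Semiring R]

lemma norm_map_eq_iff_norm_map_le [AddCommMonoid M] [AddCommMonoid N] [Module R M] [Module R N]
    [Norm M] [Norm N] (e : M ≃ₗ[R] N) :
    (∀ x, ‖e x‖ = ‖x‖) ↔ (∀ x, ‖e x‖ ≤ ‖x‖) ∧ ∀ y, ‖e.symm y‖ ≤ ‖y‖ := by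
  refine ⟨fun h => ⟨fun x => (h x).le, fun y => ?_⟩, fun h x => (h.1 x).antisymm ?_⟩
  · simpa using (h (e.symm y)).ge
  · simpa using h.2 (e x)

lemma nonneg_iff_map_nonneg_iff_monotone [AddCommGroup M] [AddCommGroup N] [Module R M]
    [Module R N] [PartialOrder M] [IsOrderedAddMonoid M] [PartialOrder N] [IsOrderedAddMonoid N]
    (e : M ≃ₗ[R] N) :
    (∀ x, 0 ≤ x ↔ 0 ≤ e x) ↔ Monotone e ∧ Monotone e.symm := by
  rw [monotone_iff_map_nonneg, monotone_iff_map_nonneg]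
  refine ⟨fun h => ⟨fun x => (h x).1, fun y hy => (h _).2 (by simpa using hy)⟩,
    fun h x => ⟨h.1 x, fun hx => by simpa using h.2 _ hx⟩⟩

end LinearEquiv

section UnitalMaps

variable {A B : Type*} [CStarAlgebra A] [PartialOrder A] [StarOrderedRing A]
  [CStarAlgebra B] [PartialOrder B] [StarOrderedRing B]
  {F : Type*} [FunLike F (selfAdjoint A) (selfAdjoint B)]
  [LinearMapClass F ℝ (selfAdjoint A) (selfAdjoint B)]

lemma norm_map_le_of_monotone {L : F} (hL : Monotone L) (h1 : L 1 = 1) (x : selfAdjoint A) :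
    ‖L x‖ ≤ ‖x‖ := by
  obtain ⟨hlo, hhi⟩ := (selfAdjoint.norm_le_iff x (norm_nonneg x)).1 le_rfl
  rw [selfAdjoint.norm_le_iff _ (norm_nonneg x), ← h1, ← map_smul, ← map_neg]
  exact ⟨hL hlo, hL hhi⟩

lemma monotone_of_norm_map_le {L : F} (h1 : L 1 = 1) (hL : ∀ x, ‖L x‖ ≤ ‖x‖) : Monotone L := by
  refine (monotone_iff_map_nonneg L).2 fun x hx => ?_
  refine (selfAdjoint.nonneg_iff_norm_smul_one_sub_le (hL x)).2 ?_
  calc ‖‖x‖ • 1 - L x‖ = ‖L (‖x‖ • 1 - x)‖ := by rw [map_sub, map_smul, h1]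
    _ ≤ ‖‖x‖ • 1 - x‖ := hL _
    _ ≤ ‖x‖ := (selfAdjoint.nonneg_iff_norm_smul_one_sub_le le_rfl).1 hx

open Finset in
theorem sq_map_le_map_sq {L : F} (hL : Monotone L) (h1 : L 1 = 1) (a : selfAdjoint A) :
    L a ^ 2 ≤ L (a ^ 2) := by
  refine selfAdjoint.le_of_forall_pos_le_add_smul_one fun ε hε => ?_
  obtain ⟨S, u, c, hu, hsum, hlin, hsq⟩ := selfAdjoint.exists_partition_sum_smul_eq a hε
  have hLu : ∀ k ∈ S, (0 : B) ≤ L (u k) := fun k _ => (map_zero L).symm.trans_le (hL (hu k))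
  have hLsum : ∑ k ∈ S, (L (u k) : B) = 1 := by
    rw [← AddSubgroup.val_finsetSum, ← map_sum, hsum, h1, selfAdjoint.val_one]
  calc L a ^ 2 = (∑ k ∈ S, c k • L (u k)) ^ 2 := by simp only [← hlin, map_sum, map_smul]
    _ ≤ ∑ k ∈ S, c k ^ 2 • L (u k) := by
      change ((_ : selfAdjoint B) : B) ≤ _
      simpa only [selfAdjoint.val_pow, AddSubgroup.val_finsetSum, selfAdjoint.val_smul] using
        sq_sum_smul_le_sum_sq_smul S c hLu hLsum
    _ = L (∑ k ∈ S, c k ^ 2 • u k) := by simp only [map_sum, map_smul]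
    _ ≤ L (a ^ 2 + ε • 1) := hL hsq
    _ = L (a ^ 2) + ε • 1 := by rw [map_add, map_smul, h1]

lemma monotone_of_map_sq {L : F} (hL : ∀ x, L (x ^ 2) = L x ^ 2) : Monotone L := by
  refine (monotone_iff_map_nonneg L).2 fun x hx => ?_
  obtain ⟨s, rfl⟩ : ∃ s : selfAdjoint A, s ^ 2 = x :=
    ⟨⟨CFC.sqrt (x : A), (CFC.sqrt_nonneg _).isSelfAdjoint⟩, Subtype.ext (CFC.sq_sqrt _ hx)⟩
  rw [hL]
  change (0 : B) ≤ ((L s ^ 2 : selfAdjoint B) : B)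
  rw [selfAdjoint.val_pow]
  exact IsSelfAdjoint.sq_nonneg (L s).2

variable (e : selfAdjoint A ≃ₗ[ℝ] selfAdjoint B)

lemma map_sq_of_monotone (h1 : e 1 = 1) (he : Monotone e) (he' : Monotone e.symm)
    (a : selfAdjoint A) : e (a ^ 2) = e a ^ 2 := by
  have h1' : e.symm 1 = 1 := by rw [← h1, e.symm_apply_apply]
  refine le_antisymm ?_ (sq_map_le_map_sq he h1 a)
  calc e (a ^ 2) = e (e.symm (e a) ^ 2) := by rw [e.symm_apply_apply]
    _ ≤ e (e.symm (e a ^ 2)) := he (sq_map_le_map_sq he' h1' (e a))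
    _ = e a ^ 2 := e.apply_symm_apply _

theorem norm_map_eq_iff_nonneg_iff (h1 : e 1 = 1) :
    (∀ x, ‖e x‖ = ‖x‖) ↔ ∀ x, 0 ≤ x ↔ 0 ≤ e x := by
  have h1' : e.symm 1 = 1 := by rw [← h1, e.symm_apply_apply]
  rw [e.norm_map_eq_iff_norm_map_le, e.nonneg_iff_map_nonneg_iff_monotone]
  exact ⟨fun h => ⟨monotone_of_norm_map_le h1 h.1, monotone_of_norm_map_le h1' h.2⟩,
    fun h => ⟨norm_map_le_of_monotone h.1 h1, norm_map_le_of_monotone h.2 h1'⟩⟩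

theorem map_sq_iff_nonneg_iff (h1 : e 1 = 1) :
    (∀ x, e (x ^ 2) = e x ^ 2) ↔ ∀ x, 0 ≤ x ↔ 0 ≤ e x := by
  rw [e.nonneg_iff_map_nonneg_iff_monotone]
  refine ⟨fun h => ⟨monotone_of_map_sq h, monotone_of_map_sq fun y => e.injective ?_⟩,
    fun h => map_sq_of_monotone e h1 h.1 h.2⟩
  rw [h, e.apply_symm_apply, e.apply_symm_apply]

end UnitalMaps

/-- For a unital real-linear bijection `T` between the selfadjoint parts of
unital C*-algebras, the following are equivalent: `T` is an isometry; `T` is an order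
isomorphism; `T` is a Jordan isomorphism. -/
theorem kadison_isometry_iff_order_iso_iff_jordan_iso
    {A B : Type*} [CStarAlgebra A] [PartialOrder A] [StarOrderedRing A]
    [CStarAlgebra B] [PartialOrder B] [StarOrderedRing B]
    (T : A → B)
    (hbij : Set.BijOn T {x : A | IsSelfAdjoint x} {y : B | IsSelfAdjoint y})
    (hadd : ∀ x y : A, IsSelfAdjoint x → IsSelfAdjoint y → T (x + y) = T x + T y)
    (hsmul : ∀ (t : ℝ) (x : A), IsSelfAdjoint x → T (t • x) = t • T x)
    (hone : T 1 = 1) :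
    ((∀ x : A, IsSelfAdjoint x → ‖T x‖ = ‖x‖) ↔
        (∀ x : A, IsSelfAdjoint x → (0 ≤ x ↔ 0 ≤ T x))) ∧
      ((∀ x : A, IsSelfAdjoint x → ‖T x‖ = ‖x‖) ↔
        (∀ x y : A, IsSelfAdjoint x → IsSelfAdjoint y →
          T ((2 : ℝ)⁻¹ • (x * y + y * x)) = (2 : ℝ)⁻¹ • (T x * T y + T y * T x))) := by
  set e := selfAdjoint.linearEquivOfBijOn T hbij hadd hsmul
  have he1 : e 1 = 1 := Subtype.ext hone
  have hiso : (∀ x : A, IsSelfAdjoint x → ‖T x‖ = ‖x‖) ↔ ∀ x, ‖e x‖ = ‖x‖ :=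
    ⟨fun h x => h x x.2, fun h x hx => h ⟨x, hx⟩⟩
  have hord : (∀ x : A, IsSelfAdjoint x → (0 ≤ x ↔ 0 ≤ T x)) ↔ ∀ x, 0 ≤ x ↔ 0 ≤ e x :=
    ⟨fun h x => h x x.2, fun h x hx => h ⟨x, hx⟩⟩
  have hjordan : (∀ x y : A, IsSelfAdjoint x → IsSelfAdjoint y →
      T ((2 : ℝ)⁻¹ • (x * y + y * x)) = (2 : ℝ)⁻¹ • (T x * T y + T y * T x)) ↔
      ∀ x y, e (selfAdjoint.jordanMul x y) = selfAdjoint.jordanMul (e x) (e y) :=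
    ⟨fun h x y => Subtype.ext (h x y x.2 y.2),
      fun h x y hx hy => congrArg Subtype.val (h ⟨x, hx⟩ ⟨y, hy⟩)⟩
  rw [hiso, hord, hjordan, selfAdjoint.map_jordanMul_iff_map_sq]
  exact ⟨norm_map_eq_iff_nonneg_iff e he1,
    (norm_map_eq_iff_nonneg_iff e he1).trans (map_sq_iff_nonneg_iff e he1).symm⟩
end

section
/- Let X be a partially ordered real vector space that is directed upwards (any two elements of X have a common upper bound), let Y be a real vector space, let Ω ⊆ X be an upper set, and let f : Ω → Y be a map such that for every x ∈ Ω there exist a linear map S_x : X → Y and a vector c_x ∈ Y with f(w) = S_x(w) + c_x for all w ∈ x + X₊. Then f is affine on all of Ω: there exist a single linear map S : X → Y and a vector c ∈ Y such that f(w) = S(w) + c for all w ∈ Ω. -/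
/-- If `X` is directed upwards, `Ω ⊆ X` is an upper set, and `f : Ω → Y` is
affine on each translated cone `x + X₊` with `x ∈ Ω`, then `f` is affine on all of `Ω`. -/
theorem locally_affine_on_upper_set_is_affine
    {X Y : Type*} [AddCommGroup X] [Module ℝ X] [AddCommGroup Y] [Module ℝ Y]
    (C : Set X) (hC : IsWedgeCone C)
    (hdir : ∀ x y : X, ∃ z : X, ConeLE C x z ∧ ConeLE C y z)
    (Ω : Set X) (hup : ∀ x ∈ Ω, ∀ y : X, ConeLE C x y → y ∈ Ω)
    (f : X → Y)
    (hloc : ∀ x ∈ Ω, ∃ (S : X →ₗ[ℝ] Y) (c : Y), ∀ w : X, w - x ∈ C → f w = S w + c) :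
    ∃ (S : X →ₗ[ℝ] Y) (c : Y), ∀ w ∈ Ω, f w = S w + c := by
  obtain ⟨hadd, hsmul, -⟩ := hC
  by_cases hne : ∃ x, x ∈ Ω
  · obtain ⟨x₀, hx₀⟩ := hne
    obtain ⟨S₀, c₀, h₀⟩ := hloc x₀ hx₀
    refine ⟨S₀, c₀, fun w hw => ?_⟩
    obtain ⟨S, c, h⟩ := hloc w hw
    obtain ⟨z, hz₀, hzw⟩ := hdir x₀ w
    have h0C : (0 : X) ∈ C := by
      have := hsmul 0 le_rfl _ hz₀
      simpa using this
    -- linear parts agree on C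
    have key : ∀ v ∈ C, S₀ v = S v := by
      intro v hv
      have hm₀ : z + v - x₀ ∈ C := by
        have : z + v - x₀ = (z - x₀) + v := by abel
        rw [this]; exact hadd _ hz₀ _ hv
      have hmw : z + v - w ∈ C := by
        have : z + v - w = (z - w) + v := by abel
        rw [this]; exact hadd _ hzw _ hv
      have e1 : S₀ (z + v) + c₀ = S (z + v) + c := by
        rw [← h₀ _ hm₀, ← h _ hmw]
      have e2 : S₀ z + c₀ = S z + c := by
        rw [← h₀ _ hz₀, ← h _ hzw]
      have := congrArg₂ (fun a b : Y => a - b) e1 e2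
      simpa [map_add, add_sub_add_comm, add_sub_cancel_left] using this
    -- hence on all of X
    have Sall : ∀ x : X, S₀ x = S x := by
      intro x
      obtain ⟨a, hax, ha0⟩ := hdir x 0
      have haC : a ∈ C := by simpa [ConeLE] using ha0
      have := congrArg₂ (fun p q : Y => p - q) (key a haC) (key (a - x) hax)
      simpa [map_sub, sub_sub_cancel] using this
    have hc : c₀ = c := by
      have e2 : S₀ z + c₀ = S z + c := by rw [← h₀ _ hz₀, ← h _ hzw]
      rw [Sall z] at e2
      exact add_left_cancel e2
    have hww : w - w ∈ C := by simpa using h0C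
    rw [h w hww, ← Sall w, ← hc]
  · exact ⟨0, 0, fun w hw => absurd ⟨w, hw⟩ hne⟩
end

section
/- Let A be a unital C*-algebra and let x ∈ A be a positive element with ‖x‖ = 1 which is an extreme vector of the cone A₊ of positive elements, i.e. every a ∈ A with 0 ≤ a ≤ x is of the form a = t·x for some real t ≥ 0. Then x is a projection: x² = x = x*. -/
/-- In a unital C*-algebra, a positive element of norm one which is an
extreme vector of the positive cone is a projection. -/
theorem extreme_vector_of_norm_one_is_projection
    {A : Type*} [CStarAlgebra A] [PartialOrder A] [StarOrderedRing A]
    (x : A) (hx : 0 ≤ x) (hnorm : ‖x‖ = 1)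
    (hext : ∀ a : A, 0 ≤ a → a ≤ x → ∃ t : ℝ, 0 ≤ t ∧ a = t • x) :
    x * x = x ∧ star x = x := by
  have hsa : IsSelfAdjoint x := IsSelfAdjoint.of_nonneg hx
  have hsq_nonneg : 0 ≤ x * x := by
    simpa [hsa.star_eq] using star_mul_self_nonneg x
  have : Nontrivial A := nontrivial_of_ne x 0 (by intro h; rw [h] at hnorm; simp at hnorm)
  have hsq_le : x * x ≤ x := by
    have h1 : x * x = cfc (fun r : ℝ => r * r) x := by
      rw [cfc_mul _ _ x, cfc_id' ℝ x]
    have h2 : x = cfc (fun r : ℝ => r) x := (cfc_id' ℝ x).symm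
    rw [h1]
    nth_rewrite 2 [h2]
    refine cfc_mono (fun r hr => ?_) (by fun_prop) (by fun_prop)
    have hr0 : 0 ≤ r := spectrum_nonneg_of_nonneg hx hr
    have hr1 : r ≤ 1 := by
      have := spectrum.norm_le_norm_of_mem hr
      rw [hnorm] at this
      calc r ≤ |r| := le_abs_self r
        _ ≤ 1 := by simpa using this
    nlinarith
  obtain ⟨t, ht, hxx⟩ := hext (x * x) hsq_nonneg hsq_le
  have hn : ‖x * x‖ = 1 := by
    have := CStarRing.norm_star_mul_self (x := x)
    rw [hsa.star_eq, hnorm] at this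
    simpa using this
  have ht1 : t = 1 := by
    rw [hxx, norm_smul, hnorm] at hn
    simpa [Real.norm_eq_abs, abs_of_nonneg ht] using hn
  refine ⟨?_, hsa.star_eq⟩
  rw [hxx, ht1, one_smul]
end

section
/- Let H be a complex Hilbert space with dim H ≥ 2. Then every orthogonal projection p of H onto a one-dimensional subspace is an engaged extreme vector of the cone of positive bounded operators: there exist finitely many orthogonal projections q₁, …, q_n onto one-dimensional subspaces, each distinct from p, and real numbers λ₁, …, λ_n such that p = λ₁q₁ + ⋯ + λ_nq_n. -/
/-!
Write `p` as the orthogonal projection onto `ℂ ∙ e` with `‖e‖ = 1`, and pick a unit vector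
`f ⊥ e`. The lines through `e + f` and `e - f` are orthogonal and span the same plane as `e` and
`f`, so their projections sum to the projection onto that plane: `p = P(e + f) + P(e - f) - P(f)`.
None of the three lines is `ℂ ∙ e`, since each contains a vector with nonzero inner product
with `f`.
-/

open scoped InnerProductSpace
open Module

section
variable {𝕜 E : Type*} [RCLike 𝕜] [NormedAddCommGroup E] [InnerProductSpace 𝕜 E]

theorem Submodule.exists_norm_eq_one_mem {K : Submodule 𝕜 E} (hK : K ≠ ⊥) :
    ∃ x ∈ K, ‖x‖ = 1 := by
  obtain ⟨x, hxK, hx⟩ := (Submodule.ne_bot_iff K).mp hK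
  exact ⟨(‖x‖⁻¹ : 𝕜) • x, K.smul_mem _ hxK, norm_smul_inv_norm hx⟩

theorem exists_norm_eq_one_inner_eq_zero (hdim : 2 ≤ Module.rank 𝕜 E) (v : E) :
    ∃ w : E, ‖w‖ = 1 ∧ ⟪v, w⟫_𝕜 = 0 := by
  have hspan : (𝕜 ∙ v) ≠ ⊤ := by
    intro h
    have := rank_span_le (R := 𝕜) ({v} : Set E)
    rw [h, rank_top] at this
    exact absurd (hdim.trans (by simpa using this)) (by norm_num)
  obtain ⟨w, hw, hw1⟩ := Submodule.exists_norm_eq_one_mem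
    (mt Submodule.orthogonal_eq_bot_iff.mp hspan)
  exact ⟨w, hw1, Submodule.mem_orthogonal_singleton_iff_inner_right.mp hw⟩

theorem span_singleton_ne_of_inner_eq_zero_of_inner_ne_zero {e f x : E} (hfe : ⟪f, e⟫_𝕜 = 0)
    (hfx : ⟪f, x⟫_𝕜 ≠ 0) : (𝕜 ∙ x) ≠ (𝕜 ∙ e) := by
  intro h
  obtain ⟨c, rfl⟩ := Submodule.mem_span_singleton.mp (h ▸ Submodule.mem_span_singleton_self x)
  exact hfx (by rw [inner_smul_right, hfe, mul_zero])

theorem finrank_range_starProjection_span_singleton {x : E} (hx : x ≠ 0) :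
    finrank 𝕜 (LinearMap.range ((𝕜 ∙ x).starProjection : E →ₗ[𝕜] E)) = 1 := by
  rw [Submodule.range_starProjection]
  exact finrank_span_singleton hx

theorem starProjection_span_add_add_starProjection_span_sub {e f : E} (hef : ⟪e, f⟫_𝕜 = 0)
    (hnorm : ‖e‖ = ‖f‖) :
    (𝕜 ∙ (e + f)).starProjection + (𝕜 ∙ (e - f)).starProjection =
      (𝕜 ∙ e).starProjection + (𝕜 ∙ f).starProjection := by
  have hfe : ⟪f, e⟫_𝕜 = 0 := inner_eq_zero_symm.mp hef
  have hadd : ‖e + f‖ ^ 2 = 2 * ‖e‖ ^ 2 := by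
    rw [@norm_add_sq 𝕜, hef, ← hnorm]; simp; ring
  have hsub : ‖e - f‖ ^ 2 = 2 * ‖e‖ ^ 2 := by
    rw [@norm_sub_sq 𝕜, hef, ← hnorm]; simp; ring
  ext x
  simp only [add_apply, Submodule.starProjection_singleton, hadd, hsub,
    ← hnorm, inner_add_left, inner_sub_left]
  match_scalars <;> ring

variable [CompleteSpace E]

theorem IsStarProjection.exists_eq_starProjection_span_singleton {p : E →L[𝕜] E}
    (hp : IsStarProjection p) (hrank : finrank 𝕜 (LinearMap.range (p : E →ₗ[𝕜] E)) = 1) :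
    ∃ e : E, ‖e‖ = 1 ∧ p = (𝕜 ∙ e).starProjection := by
  obtain ⟨_, hp_eq⟩ := isStarProjection_iff_eq_starProjection_range.mp hp
  have : FiniteDimensional 𝕜 p.range := Module.finite_of_finrank_eq_succ hrank
  obtain ⟨e, he, he1⟩ := Submodule.exists_norm_eq_one_mem (K := p.range)
    (Submodule.one_le_finrank_iff.mp hrank.ge)
  have hspan : (𝕜 ∙ e) = p.range :=
    Submodule.eq_of_le_of_finrank_eq ((Submodule.span_singleton_le_iff_mem _ _).mpr he)
      (by rw [finrank_span_singleton (norm_ne_zero_iff.mp (by simp [he1])), ← hrank])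
  exact ⟨e, he1, hp_eq.trans (Submodule.starProjection_inj.mpr hspan.symm)⟩

end

/-- If `dim H ≥ 2`, every rank-one orthogonal projection `p` on `H` is an
engaged extreme vector of the cone of positive operators: `p` is a real linear combination
of rank-one orthogonal projections, each distinct from `p`. -/
theorem rank_one_projection_is_engaged
    {H : Type*} [NormedAddCommGroup H] [InnerProductSpace ℂ H] [CompleteSpace H]
    (hdim : 2 ≤ Module.rank ℂ H)
    (p : H →L[ℂ] H) (hp_idem : p * p = p) (hp_sa : IsSelfAdjoint p)
    (hp_rank : Module.finrank ℂ (LinearMap.range (p : H →ₗ[ℂ] H)) = 1) :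
    ∃ (n : ℕ) (q : Fin n → (H →L[ℂ] H)) (c : Fin n → ℝ),
      (∀ i, q i * q i = q i ∧ IsSelfAdjoint (q i) ∧
        Module.finrank ℂ (LinearMap.range (q i : H →ₗ[ℂ] H)) = 1 ∧ q i ≠ p) ∧
      p = ∑ i, c i • q i := by
  obtain ⟨e, he, rfl⟩ :=
    IsStarProjection.exists_eq_starProjection_span_singleton ⟨hp_idem, hp_sa⟩ hp_rank
  obtain ⟨f, hf, hef⟩ := exists_norm_eq_one_inner_eq_zero hdim e
  have hfe : ⟪f, e⟫_ℂ = 0 := inner_eq_zero_symm.mp hef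
  have hff : ⟪f, f⟫_ℂ = 1 := by simp [inner_self_eq_norm_sq_to_K, hf]
  have hq (x : H) (hx : ⟪f, x⟫_ℂ ≠ 0) :
      (ℂ ∙ x).starProjection * (ℂ ∙ x).starProjection = (ℂ ∙ x).starProjection ∧
        IsSelfAdjoint (ℂ ∙ x).starProjection ∧
        finrank ℂ (LinearMap.range ((ℂ ∙ x).starProjection : H →ₗ[ℂ] H)) = 1 ∧
        (ℂ ∙ x).starProjection ≠ (ℂ ∙ e).starProjection :=
    ⟨(ℂ ∙ x).isIdempotentElem_starProjection, isSelfAdjoint_starProjection _,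
      finrank_range_starProjection_span_singleton (by rintro rfl; simp at hx),
      Submodule.starProjection_inj.not.mpr
        (span_singleton_ne_of_inner_eq_zero_of_inner_ne_zero hfe hx)⟩
  refine ⟨3, ![(ℂ ∙ (e + f)).starProjection, (ℂ ∙ (e - f)).starProjection,
    (ℂ ∙ f).starProjection], ![1, 1, -1], fun i ↦ ?_, ?_⟩
  · fin_cases i <;> apply hq <;>
      simp only [inner_add_right, inner_sub_right, hfe, hff] <;> norm_num
  · rw [eq_sub_of_add_eq (starProjection_span_add_add_starProjection_span_sub hef
      (he.trans hf.symm)).symm]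
    simp [Fin.sum_univ_three, sub_eq_add_neg]
end

section
/- Let H be a complex Hilbert space and let x be a positive bounded operator on H. Then x is the least upper bound, in the Loewner order on bounded selfadjoint operators on H, of the set of positive finite-rank bounded operators y with y ≤ x. -/
open scoped ComplexOrder

/-- The Loewner order on bounded operators on a complex Hilbert space:
`S ≤ T` iff `⟨(T - S) ξ, ξ⟩ ≥ 0` for all `ξ`. -/
def LoewnerLE {H : Type*} [NormedAddCommGroup H] [InnerProductSpace ℂ H]
    (S T : H →L[ℂ] H) : Prop :=
  ∀ ξ : H, 0 ≤ (inner ℂ ((T - S) ξ) ξ : ℂ)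

/-!
For a positive `x` and a vector `ξ`, the rank-one operator `y = |xξ⟩⟨xξ| / ⟪xξ, ξ⟫` is positive,
lies below `x` by Cauchy–Schwarz for the semi-inner product `⟪x ·, ·⟫`, and satisfies
`⟪y ξ, ξ⟫ = ⟪x ξ, ξ⟫`. So every upper bound `z` of the finite-rank operators below `x` has
`⟪z ξ, ξ⟫ ≥ ⟪x ξ, ξ⟫` for all `ξ`.
-/

open InnerProductSpace RCLike
open scoped InnerProductSpace

theorem loewnerLE_iff_le {H : Type*} [NormedAddCommGroup H] [InnerProductSpace ℂ H]
    {S T : H →L[ℂ] H} : LoewnerLE S T ↔ S ≤ T := by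
  rw [ContinuousLinearMap.le_def, ContinuousLinearMap.isPositive_iff]
  refine ⟨fun h => ⟨?_, h⟩, And.right⟩
  rw [LinearMap.isSymmetric_iff_inner_map_self_real]
  exact fun v => Complex.conj_eq_iff_im.2 (Complex.nonneg_iff.1 (h v)).2.symm

namespace ContinuousLinearMap

variable {𝕜 E : Type*} [RCLike 𝕜] [NormedAddCommGroup E] [InnerProductSpace 𝕜 E]

theorem IsPositive.norm_inner_sq_le {T : E →L[𝕜] E} (hT : T.IsPositive) (a b : E) :
    ‖⟪T a, b⟫_𝕜‖ ^ 2 ≤ re ⟪T a, a⟫_𝕜 * re ⟪T b, b⟫_𝕜 := by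
  let core : PreInnerProductSpace.Core 𝕜 E :=
    { inner u v := ⟪T u, v⟫_𝕜
      conj_inner_symm u v := by rw [hT.inner_left_eq_inner_right, inner_conj_symm]
      re_inner_nonneg := hT.re_inner_nonneg_left
      add_left u v w := by rw [map_add, inner_add_left]
      smul_left u v r := by rw [map_smul, inner_smul_left] }
  calc ‖⟪T a, b⟫_𝕜‖ ^ 2 = ‖⟪T a, b⟫_𝕜‖ * ‖⟪T b, a⟫_𝕜‖ := by
        rw [sq, hT.inner_left_eq_inner_right b, norm_inner_symm]
    _ ≤ re ⟪T a, a⟫_𝕜 * re ⟪T b, b⟫_𝕜 :=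
        @InnerProductSpace.Core.inner_mul_inner_self_le 𝕜 E _ _ _ core a b

/-- `η ↦ (⟪T ξ, η⟫ / re ⟪T ξ, ξ⟫) • T ξ`; it is `0` when `re ⟪T ξ, ξ⟫ = 0`, since `0⁻¹ = 0`. -/
noncomputable def rankOneMinorant (T : E →L[𝕜] E) (ξ : E) : E →L[𝕜] E :=
  ((re ⟪T ξ, ξ⟫_𝕜)⁻¹ : 𝕜) • rankOne 𝕜 (T ξ) (T ξ)

theorem inner_rankOneMinorant_apply (T : E →L[𝕜] E) (ξ η : E) :
    ⟪rankOneMinorant T ξ η, η⟫_𝕜 = ((‖⟪T ξ, η⟫_𝕜‖ ^ 2 / re ⟪T ξ, ξ⟫_𝕜 : ℝ) : 𝕜) := by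
  simp only [rankOneMinorant, smul_apply, rankOne_apply, inner_smul_left, map_mul, map_inv₀,
    conj_ofReal, RCLike.conj_mul, div_eq_inv_mul, ofReal_pow]

theorem finiteDimensional_range_rankOneMinorant (T : E →L[𝕜] E) (ξ : E) :
    FiniteDimensional 𝕜 (LinearMap.range (rankOneMinorant T ξ : E →ₗ[𝕜] E)) := by
  refine Submodule.finiteDimensional_of_le (S₂ := 𝕜 ∙ T ξ) ?_
  rintro _ ⟨η, rfl⟩
  simp only [coe_coe, rankOneMinorant, smul_apply, rankOne_apply]
  exact Submodule.smul_mem _ _ (Submodule.smul_mem _ _ (Submodule.mem_span_singleton_self _))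

variable {T : E →L[𝕜] E}

theorem rankOneMinorant_nonneg (hT : 0 ≤ T) (ξ : E) : 0 ≤ rankOneMinorant T ξ := by
  rw [nonneg_iff_isPositive] at hT ⊢
  exact (isPositive_rankOne_self _).smul_of_nonneg <| by
    simpa using inv_nonneg.2 (hT.re_inner_nonneg_left ξ)

theorem rankOneMinorant_le (hT : 0 ≤ T) (ξ : E) : rankOneMinorant T ξ ≤ T := by
  have hy := (nonneg_iff_isPositive _).1 (rankOneMinorant_nonneg hT ξ)
  rw [nonneg_iff_isPositive] at hT
  refine ⟨hT.isSymmetric.sub hy.isSymmetric, fun η => ?_⟩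
  rw [reApplyInnerSelf_apply, sub_apply, inner_sub_left, map_sub, inner_rankOneMinorant_apply,
    ofReal_re, sub_nonneg]
  exact div_le_of_le_mul₀ (hT.re_inner_nonneg_left ξ) (hT.re_inner_nonneg_left η)
    (by rw [mul_comm]; exact hT.norm_inner_sq_le ξ η)

theorem inner_rankOneMinorant_apply_self (hT : 0 ≤ T) (ξ : E) :
    ⟪rankOneMinorant T ξ ξ, ξ⟫_𝕜 = ⟪T ξ, ξ⟫_𝕜 := by
  rw [nonneg_iff_isPositive] at hT
  have hnorm : ‖⟪T ξ, ξ⟫_𝕜‖ = re ⟪T ξ, ξ⟫_𝕜 := by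
    simpa using congrArg re (norm_of_nonneg' (hT.inner_nonneg_left ξ))
  rw [inner_rankOneMinorant_apply, hnorm, sq, mul_self_div_self]
  exact hT.isSymmetric.coe_re_inner_apply_self ξ

end ContinuousLinearMap

/-- A positive bounded operator `x` on a complex Hilbert space is the least
upper bound, among the bounded selfadjoint operators with the Loewner order, of the set of
positive finite-rank operators `y` with `y ≤ x`. -/
theorem positive_operator_is_lub_of_finite_rank_below
    {H : Type*} [NormedAddCommGroup H] [InnerProductSpace ℂ H] [CompleteSpace H]
    (x : H →L[ℂ] H) (hx : LoewnerLE 0 x) :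
    (∀ y : H →L[ℂ] H,
        (LoewnerLE 0 y ∧ FiniteDimensional ℂ (LinearMap.range (y : H →ₗ[ℂ] H)) ∧ LoewnerLE y x) →
          LoewnerLE y x) ∧
      (∀ z : H →L[ℂ] H, IsSelfAdjoint z →
        (∀ y : H →L[ℂ] H,
          (LoewnerLE 0 y ∧ FiniteDimensional ℂ (LinearMap.range (y : H →ₗ[ℂ] H)) ∧ LoewnerLE y x) →
            LoewnerLE y z) →
        LoewnerLE x z) := by
  refine ⟨fun y hy => hy.2.2, fun z _ hub ξ => ?_⟩
  have hx' : 0 ≤ x := loewnerLE_iff_le.1 hx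
  have hy : LoewnerLE (x.rankOneMinorant ξ) z := hub _
    ⟨loewnerLE_iff_le.2 (ContinuousLinearMap.rankOneMinorant_nonneg hx' ξ),
      x.finiteDimensional_range_rankOneMinorant ξ,
      loewnerLE_iff_le.2 (ContinuousLinearMap.rankOneMinorant_le hx' ξ)⟩
  simpa only [sub_apply, inner_sub_left,
    ContinuousLinearMap.inner_rankOneMinorant_apply_self hx' ξ] using hy ξ
end

section
/- Let n, m ≥ 1 and let f : ℝ₊ⁿ → ℝ₊ᵐ be an order isomorphism between the cones of coordinatewise-nonnegative vectors in ℝⁿ and ℝᵐ, with the coordinatewise partial order. Then n = m, and there exist a bijection σ : {1, …, n} → {1, …, m} and order isomorphisms f_i : ℝ₊ → ℝ₊ for i = 1, …, n such that f(x)_{σ(i)} = f_i(x_i) for all x ∈ ℝ₊ⁿ and all i. -/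
/-- Vectors whose lower set in the positive cone is totally ordered. -/
def IsChainPt {k : ℕ} (x : Fin k → ℝ) : Prop :=
  ∀ y z : Fin k → ℝ, 0 ≤ y → y ≤ x → 0 ≤ z → z ≤ x → y ≤ z ∨ z ≤ y

lemma aux_single_nonneg {k : ℕ} (i : Fin k) {t : ℝ} (ht : 0 ≤ t) :
    (0 : Fin k → ℝ) ≤ Pi.single i t :=
  Pi.single_nonneg.mpr ht

lemma aux_single_le_single {k : ℕ} (i : Fin k) {s t : ℝ} :
    (Pi.single i s : Fin k → ℝ) ≤ Pi.single i t ↔ s ≤ t := by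
  constructor
  · intro h; simpa using h i
  · intro h j
    by_cases hj : j = i
    · subst hj; simpa using h
    · simp [Pi.single_eq_of_ne hj]

lemma aux_single_le {k : ℕ} {x : Fin k → ℝ} (hx : (0 : Fin k → ℝ) ≤ x) (i : Fin k) :
    Pi.single i (x i) ≤ x := by
  intro j
  by_cases hj : j = i
  · subst hj; simp
  · simpa [Pi.single_eq_of_ne hj] using hx j

lemma isChainPt_iff {k : ℕ} {x : Fin k → ℝ} (hx : (0 : Fin k → ℝ) ≤ x) :
    IsChainPt x ↔ ∀ i j, x i ≠ 0 → x j ≠ 0 → i = j := by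
  constructor
  · intro h i j hi hj
    by_contra hij
    rcases h (Pi.single i (x i)) (Pi.single j (x j))
        (aux_single_nonneg i (hx i)) (aux_single_le hx i)
        (aux_single_nonneg j (hx j)) (aux_single_le hx j) with hle | hle
    · have := hle i
      rw [Pi.single_eq_same, Pi.single_eq_of_ne hij] at this
      exact hi (le_antisymm this (hx i))
    · have := hle j
      rw [Pi.single_eq_same, Pi.single_eq_of_ne (Ne.symm hij)] at this
      exact hj (le_antisymm this (hx j))
  · intro h y z hy hyx hz hzx
    by_cases hx0 : ∀ l, x l = 0
    · left
      intro l
      have h1 : y l = 0 := le_antisymm (by simpa [hx0 l] using hyx l) (hy l)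
      have h2 : z l = 0 := le_antisymm (by simpa [hx0 l] using hzx l) (hz l)
      simp [h1, h2]
    · push_neg at hx0
      obtain ⟨i, hi⟩ := hx0
      have hsupp : ∀ j, j ≠ i → x j = 0 := by
        intro j hj
        by_contra hj0
        exact hj (h j i hj0 hi)
      have hy0 : ∀ j, j ≠ i → y j = 0 := fun j hj =>
        le_antisymm (by simpa [hsupp j hj] using hyx j) (hy j)
      have hz0 : ∀ j, j ≠ i → z j = 0 := fun j hj =>
        le_antisymm (by simpa [hsupp j hj] using hzx j) (hz j)
      rcases le_total (y i) (z i) with hle | hle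
      · left; intro j
        by_cases hj : j = i
        · subst hj; exact hle
        · simp [hy0 j hj, hz0 j hj]
      · right; intro j
        by_cases hj : j = i
        · subst hj; exact hle
        · simp [hy0 j hj, hz0 j hj]

/-- Every order isomorphism `f : ℝ₊ⁿ → ℝ₊ᵐ` between the coordinatewise
positive cones is a coordinate permutation composed with order isomorphisms of `ℝ₊` in each
coordinate; in particular `n = m`. -/
theorem order_iso_of_positive_orthants
    (n m : ℕ) (hn : 1 ≤ n) (hm : 1 ≤ m)
    (f : (Fin n → ℝ) → (Fin m → ℝ))
    (hbij : Set.BijOn f {x | 0 ≤ x} {y | 0 ≤ y})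
    (hiso : ∀ x ∈ {x : Fin n → ℝ | 0 ≤ x}, ∀ y ∈ {x : Fin n → ℝ | 0 ≤ x},
      (x ≤ y ↔ f x ≤ f y)) :
    n = m ∧
      ∃ (σ : Fin n ≃ Fin m) (g : Fin n → ℝ → ℝ),
        (∀ i, Set.BijOn (g i) (Set.Ici (0 : ℝ)) (Set.Ici (0 : ℝ)) ∧
          ∀ s ∈ Set.Ici (0 : ℝ), ∀ t ∈ Set.Ici (0 : ℝ), (s ≤ t ↔ g i s ≤ g i t)) ∧
        ∀ x : Fin n → ℝ, 0 ≤ x → ∀ i : Fin n, f x (σ i) = g i (x i) := by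
  classical
  have hfnn : ∀ x : Fin n → ℝ, 0 ≤ x → 0 ≤ f x := fun x hx => hbij.mapsTo hx
  have hle : ∀ x y : Fin n → ℝ, 0 ≤ x → 0 ≤ y → (x ≤ y ↔ f x ≤ f y) :=
    fun x y hx hy => hiso x hx y hy
  have hsurj : ∀ y : Fin m → ℝ, 0 ≤ y → ∃ x, 0 ≤ x ∧ f x = y := by
    intro y hy
    obtain ⟨x, hx, hfx⟩ := hbij.surjOn hy
    exact ⟨x, hx, hfx⟩
  have hinj : ∀ x y : Fin n → ℝ, 0 ≤ x → 0 ≤ y → f x = f y → x = y :=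
    fun x y hx hy h => hbij.injOn hx hy h
  have hf0 : f 0 = 0 := by
    obtain ⟨w, hw, hfw⟩ := hsurj 0 le_rfl
    have h1 : f 0 ≤ f w := (hle 0 w le_rfl hw).mp hw
    rw [hfw] at h1
    exact le_antisymm h1 (hfnn 0 le_rfl)
  -- f preserves pointwise infima of nonnegative vectors
  have hinf : ∀ a b : Fin n → ℝ, 0 ≤ a → 0 ≤ b → f (a ⊓ b) = f a ⊓ f b := by
    intro a b ha hb
    have hab : (0 : Fin n → ℝ) ≤ a ⊓ b := le_inf ha hb
    have h1 : f (a ⊓ b) ≤ f a ⊓ f b :=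
      le_inf ((hle _ _ hab ha).mp inf_le_left) ((hle _ _ hab hb).mp inf_le_right)
    obtain ⟨w, hw, hfw⟩ := hsurj (f a ⊓ f b) (le_inf (hfnn a ha) (hfnn b hb))
    have hwa : w ≤ a := (hle w a hw ha).mpr (hfw ▸ inf_le_left)
    have hwb : w ≤ b := (hle w b hw hb).mpr (hfw ▸ inf_le_right)
    have h2 : f a ⊓ f b ≤ f (a ⊓ b) := hfw ▸ (hle w _ hw hab).mp (le_inf hwa hwb)
    exact le_antisymm h1 h2
  -- chain points transfer along f
  have hchain_iff : ∀ x : Fin n → ℝ, 0 ≤ x → (IsChainPt x ↔ IsChainPt (f x)) := by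
    intro x hx
    constructor
    · intro h y z hy hyfx hz hzfx
      obtain ⟨y', hy', rfl⟩ := hsurj y hy
      obtain ⟨z', hz', rfl⟩ := hsurj z hz
      have hy'x : y' ≤ x := (hle y' x hy' hx).mpr hyfx
      have hz'x : z' ≤ x := (hle z' x hz' hx).mpr hzfx
      rcases h y' z' hy' hy'x hz' hz'x with h' | h'
      · exact Or.inl ((hle y' z' hy' hz').mp h')
      · exact Or.inr ((hle z' y' hz' hy').mp h')
    · intro h y z hy hyx hz hzx
      rcases h (f y) (f z) (hfnn y hy) ((hle y x hy hx).mp hyx)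
          (hfnn z hz) ((hle z x hz hx).mp hzx) with h' | h'
      · exact Or.inl ((hle y z hy hz).mpr h')
      · exact Or.inr ((hle z y hz hy).mpr h')
  -- for each i, f (single i 1) has a nonzero coordinate
  have hone : ∀ i : Fin n, ∃ k : Fin m, f (Pi.single i 1) k ≠ 0 := by
    intro i
    have hne : f (Pi.single i 1) ≠ 0 := by
      intro h
      have := hinj (Pi.single i 1) 0 (aux_single_nonneg i zero_le_one) le_rfl (by rw [h, hf0])
      have := congrFun this i
      simp at this
    exact Function.ne_iff.mp hne
  choose σ' hσ' using hone
  -- the image of single i t is supported on σ' i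
  have hchain_single : ∀ (i : Fin n) (t : ℝ), 0 ≤ t → IsChainPt (f (Pi.single i t)) := by
    intro i t ht
    rw [← hchain_iff _ (aux_single_nonneg i ht)]
    rw [isChainPt_iff (aux_single_nonneg i ht)]
    intro a b ha hb
    by_contra hab
    rcases ne_or_eq a i with h1 | h1
    · exact ha (by simp [Pi.single_eq_of_ne h1])
    · rcases ne_or_eq b i with h2 | h2
      · exact hb (by simp [Pi.single_eq_of_ne h2])
      · exact hab (h1.trans h2.symm)
  have huniq1 : ∀ (i : Fin n) (k : Fin m), k ≠ σ' i → f (Pi.single i 1) k = 0 := by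
    intro i k hk
    by_contra h0
    exact hk (((isChainPt_iff (hfnn _ (aux_single_nonneg i zero_le_one))).mp
      (hchain_single i 1 zero_le_one)) k (σ' i) h0 (hσ' i))
  have huniq : ∀ (i : Fin n) (t : ℝ), 0 ≤ t → ∀ k : Fin m, k ≠ σ' i →
      f (Pi.single i t) k = 0 := by
    intro i t ht k hk
    rcases le_or_gt t 1 with h1 | h1
    · have hmono : f (Pi.single i t) ≤ f (Pi.single i 1) :=
        (hle _ _ (aux_single_nonneg i ht) (aux_single_nonneg i zero_le_one)).mp
          ((aux_single_le_single i).mpr h1)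
      have := hmono k
      rw [huniq1 i k hk] at this
      exact le_antisymm this (hfnn _ (aux_single_nonneg i ht) k)
    · have hmono : f (Pi.single i 1) ≤ f (Pi.single i t) :=
        (hle _ _ (aux_single_nonneg i zero_le_one) (aux_single_nonneg i ht)).mp
          ((aux_single_le_single i).mpr h1.le)
      have hpos : f (Pi.single i t) (σ' i) ≠ 0 := by
        intro h0
        have := hmono (σ' i)
        rw [h0] at this
        exact hσ' i (le_antisymm this (hfnn _ (aux_single_nonneg i zero_le_one) (σ' i)))
      by_contra h0
      exact hk (((isChainPt_iff (hfnn _ (aux_single_nonneg i ht))).mp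
        (hchain_single i t ht)) k (σ' i) h0 hpos)
  set g : Fin n → ℝ → ℝ := fun i t => f (Pi.single i t) (σ' i) with hg_def
  have hsingle : ∀ (i : Fin n) (t : ℝ), 0 ≤ t →
      f (Pi.single i t) = Pi.single (σ' i) (g i t) := by
    intro i t ht
    funext k
    by_cases hk : k = σ' i
    · subst hk; simp [hg_def]
    · rw [huniq i t ht k hk, Pi.single_eq_of_ne hk]
  have hg_nonneg : ∀ (i : Fin n) (t : ℝ), 0 ≤ t → 0 ≤ g i t :=
    fun i t ht => hfnn _ (aux_single_nonneg i ht) (σ' i)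
  have hg_iff : ∀ (i : Fin n) (s t : ℝ), 0 ≤ s → 0 ≤ t → (s ≤ t ↔ g i s ≤ g i t) := by
    intro i s t hs ht
    calc s ≤ t ↔ (Pi.single i s : Fin n → ℝ) ≤ Pi.single i t :=
            (aux_single_le_single i).symm
      _ ↔ f (Pi.single i s) ≤ f (Pi.single i t) :=
            hle _ _ (aux_single_nonneg i hs) (aux_single_nonneg i ht)
      _ ↔ (Pi.single (σ' i) (g i s) : Fin m → ℝ) ≤ Pi.single (σ' i) (g i t) := by
            rw [hsingle i s hs, hsingle i t ht]
      _ ↔ g i s ≤ g i t := aux_single_le_single (σ' i)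
  -- injectivity of σ'
  have hσinj : Function.Injective σ' := by
    intro i j hij
    by_contra hne
    rcases le_total (g i 1) (g j 1) with h | h
    · have : f (Pi.single i 1) ≤ f (Pi.single j 1) := by
        rw [hsingle i 1 zero_le_one, hsingle j 1 zero_le_one, hij]
        exact (aux_single_le_single (σ' j)).mpr h
      have h2 : (Pi.single i 1 : Fin n → ℝ) ≤ Pi.single j 1 :=
        (hle _ _ (aux_single_nonneg i zero_le_one) (aux_single_nonneg j zero_le_one)).mpr this
      have := h2 i
      rw [Pi.single_eq_same, Pi.single_eq_of_ne hne] at this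
      linarith
    · have : f (Pi.single j 1) ≤ f (Pi.single i 1) := by
        rw [hsingle i 1 zero_le_one, hsingle j 1 zero_le_one, hij]
        exact (aux_single_le_single (σ' j)).mpr h
      have h2 : (Pi.single j 1 : Fin n → ℝ) ≤ Pi.single i 1 :=
        (hle _ _ (aux_single_nonneg j zero_le_one) (aux_single_nonneg i zero_le_one)).mpr this
      have := h2 j
      rw [Pi.single_eq_same, Pi.single_eq_of_ne (Ne.symm hne)] at this
      linarith
  -- preimages of positive singles
  have hpre : ∀ (k : Fin m) (r : ℝ), 0 < r → ∃ (i : Fin n) (t : ℝ),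
      0 ≤ t ∧ σ' i = k ∧ g i t = r := by
    intro k r hr
    obtain ⟨w, hw, hfw⟩ := hsurj (Pi.single k r : Fin m → ℝ) (aux_single_nonneg k hr.le)
    have hchainw : IsChainPt w := by
      rw [hchain_iff w hw, hfw, isChainPt_iff (aux_single_nonneg k hr.le)]
      intro a b ha hb
      by_contra hab
      rcases ne_or_eq a k with h1 | h1
      · exact ha (by simp [Pi.single_eq_of_ne h1])
      · rcases ne_or_eq b k with h2 | h2
        · exact hb (by simp [Pi.single_eq_of_ne h2])
        · exact hab (h1.trans h2.symm)
    have hw0 : w ≠ 0 := by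
      intro h
      rw [h, hf0] at hfw
      have := congrFun hfw k
      rw [Pi.zero_apply, Pi.single_eq_same] at this
      linarith
    obtain ⟨i, hi⟩ := Function.ne_iff.mp hw0
    rw [Pi.zero_apply] at hi
    have hwsingle : w = Pi.single i (w i) := by
      funext j
      by_cases hj : j = i
      · subst hj; simp
      · rw [Pi.single_eq_of_ne hj]
        by_contra hj0
        exact hj (((isChainPt_iff hw).mp hchainw) j i hj0 hi)
    have hfweq : (Pi.single (σ' i) (g i (w i)) : Fin m → ℝ) = Pi.single k r := by
      rw [← hsingle i (w i) (hw i), ← hwsingle, hfw]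
    have hσik : σ' i = k := by
      by_contra hne
      have := congrFun hfweq k
      rw [Pi.single_eq_same, Pi.single_eq_of_ne (Ne.symm hne)] at this
      linarith
    refine ⟨i, w i, hw i, hσik, ?_⟩
    have := congrFun hfweq (σ' i)
    rwa [Pi.single_eq_same, hσik, Pi.single_eq_same] at this
  have hσsurj : Function.Surjective σ' := by
    intro k
    obtain ⟨i, t, -, hik, -⟩ := hpre k 1 one_pos
    exact ⟨i, hik⟩
  have hbijσ : Function.Bijective σ' := ⟨hσinj, hσsurj⟩
  have hnm : n = m := by
    have := Fintype.card_of_bijective hbijσ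
    simpa using this
  -- surjectivity of g i on [0,∞)
  have hgsurj : ∀ (i : Fin n) (r : ℝ), 0 ≤ r → ∃ t, 0 ≤ t ∧ g i t = r := by
    intro i r hr
    rcases hr.lt_or_eq with hr | hr
    · obtain ⟨i', t, ht, hik, hgt⟩ := hpre (σ' i) r hr
      rcases hσinj hik with rfl
      exact ⟨t, ht, hgt⟩
    · refine ⟨0, le_rfl, ?_⟩
      rw [hg_def]
      simp only [Pi.single_zero, hf0]
      rw [← hr]
      rfl
  refine ⟨hnm, Equiv.ofBijective σ' hbijσ, g, ?_, ?_⟩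
  · intro i
    refine ⟨⟨fun t ht => hg_nonneg i t ht, fun s hs t ht hst => ?_, fun r hr => ?_⟩, ?_⟩
    · exact le_antisymm ((hg_iff i s t hs ht).mpr hst.le)
        ((hg_iff i t s ht hs).mpr hst.ge)
    · obtain ⟨t, ht, hgt⟩ := hgsurj i r hr
      exact ⟨t, ht, hgt⟩
    · intro s hs t ht
      exact hg_iff i s t hs ht
  · intro x hx i
    have hr : (0:ℝ) ≤ f x (σ' i) := hfnn x hx (σ' i)
    obtain ⟨T, hT, hgT⟩ := hgsurj i (f x (σ' i)) hr
    have hgxi : g i (x i) ≤ g i T := by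
      rw [hgT]
      have : f (Pi.single i (x i)) ≤ f x :=
        (hle _ _ (aux_single_nonneg i (hx i)) hx).mp (aux_single_le hx i)
      exact this (σ' i)
    have hxiT : x i ≤ T := (hg_iff i (x i) T (hx i) hT).mpr hgxi
    have hinfeq : x ⊓ Pi.single i T = Pi.single i (x i) := by
      funext j
      rw [Pi.inf_apply]
      by_cases hj : j = i
      · subst hj
        rw [Pi.single_eq_same, Pi.single_eq_same]
        exact inf_eq_left.mpr hxiT
      · rw [Pi.single_eq_of_ne hj, Pi.single_eq_of_ne hj]
        exact inf_eq_right.mpr (hx j)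
    have hkey : f (Pi.single i (x i)) = f x ⊓ f (Pi.single i T) := by
      rw [← hinfeq, hinf x (Pi.single i T) hx (aux_single_nonneg i hT)]
    have := congrFun hkey (σ' i)
    rw [Pi.inf_apply] at this
    have h2 : f (Pi.single i T) (σ' i) = f x (σ' i) := hgT
    rw [h2] at this
    have h3 : g i (x i) = f x (σ' i) ⊓ f x (σ' i) := this
    show f x (σ' i) = g i (x i)
    rw [h3, inf_idem]
end

section
/- Let X and Y be Hausdorff real topological vector spaces, each partially ordered by a topologically closed cone (X₊ and Y₊ respectively), and assume that in each of X and Y every increasing net of positive elements that is bounded above has a supremum and converges to this supremum. Let A ⊆ X₊ and B ⊆ Y₊ be subsets such that every element of X₊ is the limit of some net of elements of A and every element of Y₊ is the limit of some net of elements of B. Let f : X₊ → Y₊ be a homeomorphism, and let Ω, Θ be sets with A ⊆ Ω ⊆ X₊ and B ⊆ Θ ⊆ Y₊ satisfying Ω + A ⊆ Ω and Θ + B ⊆ Θ, such that f restricts to an order isomorphism of Ω onto Θ. Then f restricts to an order isomorphism of Ω^m onto Θ^m, where Ω^m denotes the set Ω together with all suprema of increasing nets in Ω that are bounded above, and Θ^m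 is defined analogously. -/
/-- `b` is the supremum (least upper bound) of the set `S` with respect to the order
induced by the cone `C`. -/
def IsSupOf {X : Type*} [AddCommGroup X] (C S : Set X) (b : X) : Prop :=
  (∀ s ∈ S, ConeLE C s b) ∧ ∀ z, (∀ s ∈ S, ConeLE C s z) → ConeLE C b z

/-- `Ω^m`: the set `Ω` together with the suprema of all increasing nets (equivalently, of all
nonempty upward-directed subsets) in `Ω` that are bounded above. -/
def MonSupAdjoin {X : Type*} [AddCommGroup X] (C Ω : Set X) : Set X :=
  Ω ∪ {x | ∃ S ⊆ Ω, S.Nonempty ∧ DirectedOn (ConeLE C) S ∧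
    (∃ z, ∀ s ∈ S, ConeLE C s z) ∧ IsSupOf C S x}

/-! The supremum `x` of a bounded directed set `S ⊆ Ω` is also its limit, so for `f` continuous
and monotone on `Ω`, `f x` is a limit of the directed set `f '' S`; closedness of `D` makes it an
upper bound of `f '' S`, and below every other upper bound, i.e. `f x = sup (f '' S)`.
Monotonicity from a point `s ∈ Ω` to an arbitrary `y ≥ s` in `C` follows by approximating
`y - s` from `A`, since `s + A ⊆ Ω`. Applying both facts to `f` and to its inverse `g` yields the
order isomorphism `Ω^m ≅ Θ^m`. -/

open Set Topology

section ConeOrder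

variable {X Y : Type*} [AddCommGroup X]

def HasMonotoneSupConvergence [TopologicalSpace X] (C : Set X) : Prop :=
  ∀ S : Set X, S ⊆ C → S.Nonempty → DirectedOn (ConeLE C) S →
    (∃ z, ∀ s ∈ S, ConeLE C s z) →
    ∃ b, IsSupOf C S b ∧ ∀ U ∈ 𝓝 b, ∃ s ∈ S, ∀ t ∈ S, ConeLE C s t → t ∈ U

section Order

variable [Module ℝ X] {C : Set X}

theorem ConeLE.trans (hC : IsWedgeCone C) {x y z : X} (hxy : ConeLE C x y)
    (hyz : ConeLE C y z) : ConeLE C x z := by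
  simpa [ConeLE] using hC.1 _ hyz _ hxy

theorem mem_of_coneLE (hC : IsWedgeCone C) {x y : X} (hx : x ∈ C) (hxy : ConeLE C x y) :
    y ∈ C := by
  simpa using hC.1 _ hxy _ hx

theorem IsSupOf.unique (hC : IsWedgeCone C) {S : Set X} {b b' : X} (hb : IsSupOf C S b)
    (hb' : IsSupOf C S b') : b = b' :=
  (sub_eq_zero.mp (hC.2.2 _ (hb.2 b' hb'.1) (by rw [neg_sub]; exact hb'.2 b hb.1))).symm

theorem monSupAdjoin_subset (hC : IsWedgeCone C) {Ω : Set X} (hΩC : Ω ⊆ C) :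
    MonSupAdjoin C Ω ⊆ C := by
  rintro x (hx | ⟨S, hSΩ, ⟨s, hs⟩, -, -, hsup⟩)
  · exact hΩC hx
  · exact mem_of_coneLE hC (hΩC (hSΩ hs)) (hsup.1 s hs)

end Order

section Topology

theorem IsClosed.apply_mem_of_tail_mem [TopologicalSpace X] [TopologicalSpace Y] {F : Set Y}
    (hF : IsClosed F) {C S : Set X} {b : X} {φ : X → Y} (hSC : S ⊆ C)
    (hdir : DirectedOn (ConeLE C) S)
    (hconv : ∀ U ∈ 𝓝 b, ∃ s ∈ S, ∀ t ∈ S, ConeLE C s t → t ∈ U)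
    (hφ : ContinuousWithinAt φ C b) {s₀ : X} (hs₀ : s₀ ∈ S)
    (hφF : ∀ t ∈ S, ConeLE C s₀ t → φ t ∈ F) : φ b ∈ F := by
  refine hF.closure_subset (mem_closure_iff_nhds.mpr fun V hV => ?_)
  obtain ⟨u, hu, hbu, huV⟩ := mem_nhdsWithin.mp (hφ hV)
  obtain ⟨s₁, hs₁, htail⟩ := hconv u (hu.mem_nhds hbu)
  obtain ⟨r, hr, hs₀r, hs₁r⟩ := hdir s₀ hs₀ s₁ hs₁
  exact ⟨φ r, huV ⟨htail r hr hs₁r, hSC hr⟩, hφF r hr hs₀r⟩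

variable [AddCommGroup Y] [TopologicalSpace X] [TopologicalSpace Y] [IsTopologicalAddGroup Y]
  {C : Set X} {D : Set Y} {Ω : Set X} {f : X → Y}

-- `s + A ⊆ Ω` is dense in `s + C`, and `D` is closed.
theorem coneLE_map_of_mem_of_coneLE [ContinuousAdd X] (hDclosed : IsClosed D) {A : Set X}
    (hAC : A ⊆ C) (hAdense : C ⊆ closure A) (hΩC : Ω ⊆ C)
    (hΩplus : ∀ w ∈ Ω, ∀ a ∈ A, w + a ∈ Ω) (hfcont : ContinuousOn f C)
    (hmono : ∀ x ∈ Ω, ∀ y ∈ Ω, ConeLE C x y → ConeLE D (f x) (f y))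
    {s y : X} (hs : s ∈ Ω) (hy : y ∈ C) (hsy : ConeLE C s y) : ConeLE D (f s) (f y) := by
  have hcont : ContinuousWithinAt (fun a => f (s + a) - f s) A (y - s) :=
    ((hfcont y hy).comp_of_eq (continuous_const_add s).continuousWithinAt
      (fun a ha => hΩC (hΩplus s hs a ha)) (add_sub_cancel s y)).sub continuousWithinAt_const
  have himage : (fun a => f (s + a) - f s) '' A ⊆ D := by
    rintro _ ⟨a, ha, rfl⟩
    exact hmono s hs _ (hΩplus s hs a ha) (by simpa [ConeLE] using hAC ha)
  simpa [ConeLE] using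
    hDclosed.closure_subset_iff.mpr himage (hcont.mem_closure_image (hAdense hsy))

variable [Module ℝ X]

theorem isSupOf_image (hC : IsWedgeCone C) (hDclosed : IsClosed D)
    (hXmc : HasMonotoneSupConvergence C) (hΩC : Ω ⊆ C) (hfcont : ContinuousOn f C)
    (hmono : ∀ x ∈ Ω, ∀ y ∈ Ω, ConeLE C x y → ConeLE D (f x) (f y))
    {S : Set X} {x : X} (hSΩ : S ⊆ Ω) (hSne : S.Nonempty) (hdir : DirectedOn (ConeLE C) S)
    (hbdd : ∃ z, ∀ s ∈ S, ConeLE C s z) (hsup : IsSupOf C S x) :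
    IsSupOf D (f '' S) (f x) := by
  have hSC : S ⊆ C := hSΩ.trans hΩC
  obtain ⟨b, hb, hconv⟩ := hXmc S hSC hSne hdir hbdd
  obtain rfl := hb.unique hC hsup
  obtain ⟨s₀, hs₀⟩ := hSne
  have hbC : b ∈ C := mem_of_coneLE hC (hSC hs₀) (hb.1 s₀ hs₀)
  refine ⟨?_, fun z hz => ?_⟩
  · rintro _ ⟨s, hs, rfl⟩
    exact hDclosed.apply_mem_of_tail_mem (φ := fun t => f t - f s) hSC hdir hconv
      ((hfcont b hbC).sub continuousWithinAt_const) hs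
      fun t ht hst => hmono s (hSΩ hs) t (hSΩ ht) hst
  · exact hDclosed.apply_mem_of_tail_mem (φ := fun t => z - f t) hSC hdir hconv
      (continuousWithinAt_const.sub (hfcont b hbC)) hs₀
      fun t ht _ => hz (f t) (mem_image_of_mem f ht)

theorem mapsTo_monSupAdjoin (hC : IsWedgeCone C) (hDclosed : IsClosed D)
    (hXmc : HasMonotoneSupConvergence C) (hΩC : Ω ⊆ C) (hfcont : ContinuousOn f C)
    {Θ : Set Y} (hfΩ : MapsTo f Ω Θ)
    (hmono : ∀ x ∈ Ω, ∀ y ∈ Ω, ConeLE C x y → ConeLE D (f x) (f y)) :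
    MapsTo f (MonSupAdjoin C Ω) (MonSupAdjoin D Θ) := by
  rintro x (hx | ⟨S, hSΩ, hSne, hdir, hbdd, hsup⟩)
  · exact Or.inl (hfΩ hx)
  · have hfsup := isSupOf_image hC hDclosed hXmc hΩC hfcont hmono hSΩ hSne hdir hbdd hsup
    refine Or.inr ⟨f '' S, (hfΩ.mono_left hSΩ).image_subset, hSne.image f, ?_,
      ⟨f x, hfsup.1⟩, hfsup⟩
    exact directedOn_image.mpr (hdir.mono' fun s hs t ht => hmono s (hSΩ hs) t (hSΩ ht))

theorem coneLE_map_of_mem_monSupAdjoin [ContinuousAdd X] (hC : IsWedgeCone C)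
    (hDclosed : IsClosed D) (hXmc : HasMonotoneSupConvergence C) {A : Set X} (hAC : A ⊆ C)
    (hAdense : C ⊆ closure A) (hΩC : Ω ⊆ C) (hΩplus : ∀ w ∈ Ω, ∀ a ∈ A, w + a ∈ Ω)
    (hfcont : ContinuousOn f C) (hmono : ∀ x ∈ Ω, ∀ y ∈ Ω, ConeLE C x y → ConeLE D (f x) (f y))
    {x y : X} (hx : x ∈ MonSupAdjoin C Ω) (hy : y ∈ C) (hxy : ConeLE C x y) :
    ConeLE D (f x) (f y) := by
  rcases hx with hx | ⟨S, hSΩ, hSne, hdir, hbdd, hsup⟩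
  · exact coneLE_map_of_mem_of_coneLE hDclosed hAC hAdense hΩC hΩplus hfcont hmono hx hy hxy
  · refine (isSupOf_image hC hDclosed hXmc hΩC hfcont hmono hSΩ hSne hdir hbdd hsup).2 _ ?_
    rintro _ ⟨s, hs, rfl⟩
    exact coneLE_map_of_mem_of_coneLE hDclosed hAC hAdense hΩC hΩplus hfcont hmono (hSΩ hs)
      hy ((hsup.1 s hs).trans hC hxy)

end Topology

end ConeOrder

theorem order_iso_extends_to_monotone_sup_adjoined_general
    {X Y : Type*}
    [AddCommGroup X] [Module ℝ X] [TopologicalSpace X] [IsTopologicalAddGroup X]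
    [AddCommGroup Y] [Module ℝ Y] [TopologicalSpace Y] [IsTopologicalAddGroup Y]
    (C : Set X) (D : Set Y) (hC : IsWedgeCone C) (hD : IsWedgeCone D)
    (hCclosed : IsClosed C) (hDclosed : IsClosed D)
    (hXmc : ∀ S : Set X, S ⊆ C → S.Nonempty → DirectedOn (ConeLE C) S →
      (∃ z, ∀ s ∈ S, ConeLE C s z) →
      ∃ b, IsSupOf C S b ∧ ∀ U ∈ nhds b, ∃ s ∈ S, ∀ t ∈ S, ConeLE C s t → t ∈ U)
    (hYmc : ∀ S : Set Y, S ⊆ D → S.Nonempty → DirectedOn (ConeLE D) S →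
      (∃ z, ∀ s ∈ S, ConeLE D s z) →
      ∃ b, IsSupOf D S b ∧ ∀ U ∈ nhds b, ∃ s ∈ S, ∀ t ∈ S, ConeLE D s t → t ∈ U)
    (A : Set X) (B : Set Y) (hAC : A ⊆ C) (hBD : B ⊆ D)
    (hAdense : C ⊆ closure A) (hBdense : D ⊆ closure B)
    (f : X → Y) (g : Y → X)
    (hgf : ∀ x ∈ C, g (f x) = x) (hfg : ∀ y ∈ D, f (g y) = y)
    (hfcont : ContinuousOn f C) (hgcont : ContinuousOn g D)
    (Ω : Set X) (Θ : Set Y)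
    (hΩC : Ω ⊆ C) (hΘD : Θ ⊆ D)
    (hΩplus : ∀ w ∈ Ω, ∀ a ∈ A, w + a ∈ Ω)
    (hΘplus : ∀ w ∈ Θ, ∀ b ∈ B, w + b ∈ Θ)
    (hfΩ : f '' Ω = Θ)
    (hiso : ∀ x ∈ Ω, ∀ y ∈ Ω, (ConeLE C x y ↔ ConeLE D (f x) (f y))) :
    f '' MonSupAdjoin C Ω = MonSupAdjoin D Θ ∧
      ∀ x ∈ MonSupAdjoin C Ω, ∀ y ∈ MonSupAdjoin C Ω,
        (ConeLE C x y ↔ ConeLE D (f x) (f y)) := by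
  subst hfΩ
  have hgΩ : MapsTo g (f '' Ω) Ω := by
    rintro _ ⟨x, hx, rfl⟩
    rwa [hgf x (hΩC hx)]
  have hgmono : ∀ u ∈ f '' Ω, ∀ v ∈ f '' Ω, ConeLE D u v → ConeLE C (g u) (g v) := by
    rintro _ ⟨x, hx, rfl⟩ _ ⟨y, hy, rfl⟩ h
    rwa [hgf x (hΩC hx), hgf y (hΩC hy), hiso x hx y hy]
  have hfmono : ∀ x ∈ Ω, ∀ y ∈ Ω, ConeLE C x y → ConeLE D (f x) (f y) :=
    fun x hx y hy => (hiso x hx y hy).mp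
  have hΩmC := monSupAdjoin_subset hC hΩC
  have hΘmD := monSupAdjoin_subset hD hΘD
  have hfm := mapsTo_monSupAdjoin hC hDclosed hXmc hΩC hfcont (mapsTo_image f Ω) hfmono
  have hgm := mapsTo_monSupAdjoin hD hCclosed hYmc hΘD hgcont hgΩ hgmono
  have hinv : InvOn g f (MonSupAdjoin C Ω) (MonSupAdjoin D (f '' Ω)) :=
    ⟨fun x hx => hgf x (hΩmC hx), fun y hy => hfg y (hΘmD hy)⟩
  refine ⟨(hinv.bijOn hfm hgm).image_eq, fun x hx y hy => ⟨fun h => ?_, fun h => ?_⟩⟩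
  · exact coneLE_map_of_mem_monSupAdjoin hC hDclosed hXmc hAC hAdense hΩC hΩplus hfcont
      hfmono hx (hΩmC hy) h
  · have := coneLE_map_of_mem_monSupAdjoin hD hCclosed hYmc hBD hBdense hΘD hΘplus hgcont
      hgmono (hfm hx) (hΘmD (hfm hy)) h
    rwa [hgf x (hΩmC hx), hgf y (hΩmC hy)] at this

/-- Let `X, Y` be Hausdorff real topological vector spaces ordered by closed
cones `C, D`, in which every bounded increasing net of positive elements has a supremum and
converges to it.  Let `A ⊆ C`, `B ⊆ D` be (net-)dense in `C`, `D` respectively, let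
`f : C → D` be a homeomorphism (with inverse `g`), and let `A ⊆ Ω ⊆ C`, `B ⊆ Θ ⊆ D` with
`Ω + A ⊆ Ω`, `Θ + B ⊆ Θ`, such that `f` restricts to an order isomorphism of `Ω` onto `Θ`.
Then `f` restricts to an order isomorphism of `Ω^m` onto `Θ^m`. -/
theorem order_iso_extends_to_monotone_sup_adjoined
    {X Y : Type*}
    [AddCommGroup X] [Module ℝ X] [TopologicalSpace X] [IsTopologicalAddGroup X]
    [ContinuousSMul ℝ X] [T2Space X]
    [AddCommGroup Y] [Module ℝ Y] [TopologicalSpace Y] [IsTopologicalAddGroup Y]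
    [ContinuousSMul ℝ Y] [T2Space Y]
    (C : Set X) (D : Set Y) (hC : IsWedgeCone C) (hD : IsWedgeCone D)
    (hCclosed : IsClosed C) (hDclosed : IsClosed D)
    (hXmc : ∀ S : Set X, S ⊆ C → S.Nonempty → DirectedOn (ConeLE C) S →
      (∃ z, ∀ s ∈ S, ConeLE C s z) →
      ∃ b, IsSupOf C S b ∧ ∀ U ∈ nhds b, ∃ s ∈ S, ∀ t ∈ S, ConeLE C s t → t ∈ U)
    (hYmc : ∀ S : Set Y, S ⊆ D → S.Nonempty → DirectedOn (ConeLE D) S →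
      (∃ z, ∀ s ∈ S, ConeLE D s z) →
      ∃ b, IsSupOf D S b ∧ ∀ U ∈ nhds b, ∃ s ∈ S, ∀ t ∈ S, ConeLE D s t → t ∈ U)
    (A : Set X) (B : Set Y) (hAC : A ⊆ C) (hBD : B ⊆ D)
    (hAdense : C ⊆ closure A) (hBdense : D ⊆ closure B)
    (f : X → Y) (g : Y → X)
    (hfC : Set.MapsTo f C D) (hgD : Set.MapsTo g D C)
    (hgf : ∀ x ∈ C, g (f x) = x) (hfg : ∀ y ∈ D, f (g y) = y)
    (hfcont : ContinuousOn f C) (hgcont : ContinuousOn g D)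
    (Ω : Set X) (Θ : Set Y)
    (hAΩ : A ⊆ Ω) (hΩC : Ω ⊆ C) (hBΘ : B ⊆ Θ) (hΘD : Θ ⊆ D)
    (hΩplus : ∀ w ∈ Ω, ∀ a ∈ A, w + a ∈ Ω)
    (hΘplus : ∀ w ∈ Θ, ∀ b ∈ B, w + b ∈ Θ)
    (hfΩ : f '' Ω = Θ)
    (hiso : ∀ x ∈ Ω, ∀ y ∈ Ω, (ConeLE C x y ↔ ConeLE D (f x) (f y))) :
    f '' MonSupAdjoin C Ω = MonSupAdjoin D Θ ∧
      ∀ x ∈ MonSupAdjoin C Ω, ∀ y ∈ MonSupAdjoin C Ω,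
        (ConeLE C x y ↔ ConeLE D (f x) (f y)) :=
  order_iso_extends_to_monotone_sup_adjoined_general C D hC hD hCclosed hDclosed hXmc hYmc A B hAC
    hBD hAdense hBdense f g hgf hfg hfcont hgcont Ω Θ hΩC hΘD hΩplus hΘplus hfΩ hiso
end
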